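/- (Claim 1.) Consider the maximal-information structure. For any team strategy pair (f,g) there exists a team strategy pair (f̄,ḡ) such that, for each t and i, f̄ⁱ_t is a (randomized) function only of (Xⁱ_t, Iᵃ_t) and ḡⁱ_t is a (randomized) function only of (Xⁱ_t, Iᵃ_{t⁺}), and J((f̄,ḡ),gᵃ) = J((f,g),gᵃ) for every adversary strategy gᵃ. -/

import Mathlib

open Finset
open scoped Classical BigOperators

namespace TA

/-- The primitive model of the team-vs-adversary control system (Section II of the paper):
finite horizon `T`, finite global/local state spaces, finite action spaces, independent
initial states, controlled Markovian dynamics given by transition kernels, an erasure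
parameter `pe`, an observation kernel `obs` for the adversary's observation `Y_t`,
a stage cost `cost` and a communication cost `commCost`. -/
structure Model where
  T : ℕ
  hT : 0 < T
  X0 : Type
  X1 : Type
  X2 : Type
  U1 : Type
  U2 : Type
  Ua : Type
  Y : Type
  [fX0 : Fintype X0]
  [fX1 : Fintype X1]
  [fX2 : Fintype X2]
  [fU1 : Fintype U1]
  [fU2 : Fintype U2]
  [fUa : Fintype Ua]
  [fY : Fintype Y]
  [nX0 : Nonempty X0]
  [nX1 : Nonempty X1]
  [nX2 : Nonempty X2]
  [nU1 : Nonempty U1]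
  [nU2 : Nonempty U2]
  [nUa : Nonempty Ua]
  [nY : Nonempty Y]
  init0 : X0 → ℝ
  init1 : X1 → ℝ
  init2 : X2 → ℝ
  trans0 : X0 → Ua → X0 → ℝ
  trans1 : X0 → X1 → U1 → X1 → ℝ
  trans2 : X0 → X2 → U2 → X2 → ℝ
  pe : X0 → ℝ
  obs : Option (X1 × X2) → Bool × Bool → X0 → Y → ℝ
  cost : ℕ → X0 → X1 × X2 → U1 × U2 → Ua → ℝ
  commCost : X0 → X1 × X2 → ℝ
  init0_nonneg : ∀ x, 0 ≤ init0 x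
  init1_nonneg : ∀ x, 0 ≤ init1 x
  init2_nonneg : ∀ x, 0 ≤ init2 x
  init0_sum : ∑ x, init0 x = 1
  init1_sum : ∑ x, init1 x = 1
  init2_sum : ∑ x, init2 x = 1
  trans0_nonneg : ∀ x u x', 0 ≤ trans0 x u x'
  trans1_nonneg : ∀ x0 x u x', 0 ≤ trans1 x0 x u x'
  trans2_nonneg : ∀ x0 x u x', 0 ≤ trans2 x0 x u x'
  trans0_sum : ∀ x u, ∑ x', trans0 x u x' = 1
  trans1_sum : ∀ x0 x u, ∑ x', trans1 x0 x u x' = 1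
  trans2_sum : ∀ x0 x u, ∑ x', trans2 x0 x u x' = 1
  pe_nonneg : ∀ x, 0 ≤ pe x
  pe_le_one : ∀ x, pe x ≤ 1
  obs_nonneg : ∀ z m x y, 0 ≤ obs z m x y
  obs_sum : ∀ z m x, ∑ y, obs z m x y = 1

attribute [instance] Model.fX0 Model.fX1 Model.fX2 Model.fU1 Model.fU2 Model.fUa Model.fY
attribute [instance] Model.nX0 Model.nX1 Model.nX2 Model.nU1 Model.nU2 Model.nUa Model.nY

/-- A full system trajectory over the horizon: global states, local states, communication
decisions, messages over the erasure channel, adversary observations, and all actions. -/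
abbrev Traj (M : Model) :=
  (Fin M.T → M.X0) × (Fin M.T → M.X1) × (Fin M.T → M.X2) ×
  (Fin M.T → Bool) × (Fin M.T → Bool) × (Fin M.T → Option (M.X1 × M.X2)) ×
  (Fin M.T → M.Y) × (Fin M.T → M.U1) × (Fin M.T → M.U2) × (Fin M.T → M.Ua)

def idx (M : Model) (t : ℕ) : Fin M.T := if h : t < M.T then ⟨t, h⟩ else ⟨0, M.hT⟩

variable {M : Model}

def X0v (ω : Traj M) (t : ℕ) : M.X0 := ω.1 (idx M t)
def X1v (ω : Traj M) (t : ℕ) : M.X1 := ω.2.1 (idx M t)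
def X2v (ω : Traj M) (t : ℕ) : M.X2 := ω.2.2.1 (idx M t)
def M1v (ω : Traj M) (t : ℕ) : Bool := ω.2.2.2.1 (idx M t)
def M2v (ω : Traj M) (t : ℕ) : Bool := ω.2.2.2.2.1 (idx M t)
def Zv (ω : Traj M) (t : ℕ) : Option (M.X1 × M.X2) := ω.2.2.2.2.2.1 (idx M t)
def Yv (ω : Traj M) (t : ℕ) : M.Y := ω.2.2.2.2.2.2.1 (idx M t)
def U1v (ω : Traj M) (t : ℕ) : M.U1 := ω.2.2.2.2.2.2.2.1 (idx M t)
def U2v (ω : Traj M) (t : ℕ) : M.U2 := ω.2.2.2.2.2.2.2.2.1 (idx M t)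
def UAv (ω : Traj M) (t : ℕ) : M.Ua := ω.2.2.2.2.2.2.2.2.2 (idx M t)
def Mv (ω : Traj M) (t : ℕ) : Bool × Bool := (M1v ω t, M2v ω t)

/-- The list of values `f 0, f 1, …, f (t-1)` (a "prefix" of a stochastic process). -/
def pre {α : Type _} (t : ℕ) (f : ℕ → α) : List α := (List.range t).map f

/-- Realizations of agent 1's information `I¹_t` (resp. `I¹_{t⁺}`):
`(X⁰_{1:t}, X¹_{1:t}, U¹_{1:t-1}, M_{1:t-1}, Z^er_{1:t-1}, Uᵃ_{1:t-1}, Y_{1:t-1})`. -/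
abbrev Hist1 (M : Model) :=
  List M.X0 × List M.X1 × List M.U1 × List (Bool × Bool) ×
  List (Option (M.X1 × M.X2)) × List M.Ua × List M.Y

/-- Realizations of agent 2's information `I²_t` (resp. `I²_{t⁺}`). -/
abbrev Hist2 (M : Model) :=
  List M.X0 × List M.X2 × List M.U2 × List (Bool × Bool) ×
  List (Option (M.X1 × M.X2)) × List M.Ua × List M.Y

/-- Realizations of the team's common information `C^team_t = I¹_t ∩ I²_t`. -/
abbrev HistC (M : Model) :=
  List M.X0 × List (Bool × Bool) × List (Option (M.X1 × M.X2)) × List M.Ua × List M.Y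

def info1 (t : ℕ) (ω : Traj M) : Hist1 M :=
  (pre (t+1) (X0v ω), pre (t+1) (X1v ω), pre t (U1v ω), pre t (Mv ω),
   pre t (Zv ω), pre t (UAv ω), pre t (Yv ω))

def info1p (t : ℕ) (ω : Traj M) : Hist1 M :=
  (pre (t+1) (X0v ω), pre (t+1) (X1v ω), pre t (U1v ω), pre (t+1) (Mv ω),
   pre (t+1) (Zv ω), pre t (UAv ω), pre (t+1) (Yv ω))

def info2 (t : ℕ) (ω : Traj M) : Hist2 M :=
  (pre (t+1) (X0v ω), pre (t+1) (X2v ω), pre t (U2v ω), pre t (Mv ω),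
   pre t (Zv ω), pre t (UAv ω), pre t (Yv ω))

def info2p (t : ℕ) (ω : Traj M) : Hist2 M :=
  (pre (t+1) (X0v ω), pre (t+1) (X2v ω), pre t (U2v ω), pre (t+1) (Mv ω),
   pre (t+1) (Zv ω), pre t (UAv ω), pre (t+1) (Yv ω))

/-- The team's common information `C^team_t` before communication at time `t`. -/
def teamCom (t : ℕ) (ω : Traj M) : HistC M :=
  (pre (t+1) (X0v ω), pre t (Mv ω), pre t (Zv ω), pre t (UAv ω), pre t (Yv ω))

/-- The team's common information `C^team_{t⁺}` after communication at time `t`. -/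
def teamComP (t : ℕ) (ω : Traj M) : HistC M :=
  (pre (t+1) (X0v ω), pre (t+1) (Mv ω), pre (t+1) (Zv ω), pre t (UAv ω), pre (t+1) (Yv ω))

/-- A behavioral communication/control strategy pair `(f,g) = (f¹,f²,g¹,g²)` for the team:
`fⁱ_t` selects a distribution on `{0,1}` for `Mⁱ_t` given `Iⁱ_t`; `gⁱ_t` selects a
distribution on `𝒰ⁱ` for `Uⁱ_t` given `Iⁱ_{t⁺}`. -/
structure TeamStrategy (M : Model) where
  f1 : ℕ → Hist1 M → Bool → ℝ
  f2 : ℕ → Hist2 M → Bool → ℝ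
  g1 : ℕ → Hist1 M → M.U1 → ℝ
  g2 : ℕ → Hist2 M → M.U2 → ℝ
  f1_nonneg : ∀ t h m, 0 ≤ f1 t h m
  f2_nonneg : ∀ t h m, 0 ≤ f2 t h m
  g1_nonneg : ∀ t h u, 0 ≤ g1 t h u
  g2_nonneg : ∀ t h u, 0 ≤ g2 t h u
  f1_sum : ∀ t h, ∑ m, f1 t h m = 1
  f2_sum : ∀ t h, ∑ m, f2 t h m = 1
  g1_sum : ∀ t h, ∑ u, g1 t h u = 1
  g2_sum : ∀ t h, ∑ u, g2 t h u = 1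

/-- A behavioral strategy for the adversary: `gᵃ_t` selects a distribution on `𝒰ᵃ`
given the adversary's information `Iᵃ_{t⁺}`, whose realizations live in `A`. -/
structure AdvStrategy (M : Model) (A : Type _) where
  ga : ℕ → A → M.Ua → ℝ
  ga_nonneg : ∀ t a u, 0 ≤ ga t a u
  ga_sum : ∀ t a, ∑ u, ga t a u = 1

/-- The kernel of the erasure channel: if `M^or_t = 0`, no message; if `M^or_t = 1`, the
joint local state is delivered w.p. `1 - pe(x⁰)` and erased w.p. `pe(x⁰)`. -/
noncomputable def zKer (M : Model) (x0 : M.X0) (m : Bool × Bool) (x : M.X1 × M.X2)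
    (z : Option (M.X1 × M.X2)) : ℝ :=
  if m = (false, false) then (if z = none then 1 else 0)
  else
    match z with
    | none => M.pe x0
    | some x' => if x' = x then 1 - M.pe x0 else 0

/-- The probability of a full trajectory under the team strategy `σ`, the adversary
strategy `γ`, where `iap t ω` is the realization of the adversary's information
`Iᵃ_{t⁺}` along `ω` (this parametrizes the adversary's information structure). -/
noncomputable def prob (σ : TeamStrategy M) {A : Type _} (γ : AdvStrategy M A)
    (iap : ℕ → Traj M → A) (ω : Traj M) : ℝ :=
  M.init0 (X0v ω 0) * M.init1 (X1v ω 0) * M.init2 (X2v ω 0) *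
  (∏ t ∈ Finset.range M.T,
    (σ.f1 t (info1 t ω) (M1v ω t) * σ.f2 t (info2 t ω) (M2v ω t) *
     zKer M (X0v ω t) (Mv ω t) (X1v ω t, X2v ω t) (Zv ω t) *
     M.obs (Zv ω t) (Mv ω t) (X0v ω t) (Yv ω t) *
     σ.g1 t (info1p t ω) (U1v ω t) * σ.g2 t (info2p t ω) (U2v ω t) *
     γ.ga t (iap t ω) (UAv ω t))) *
  (∏ t ∈ Finset.range (M.T - 1),
    (M.trans0 (X0v ω t) (UAv ω t) (X0v ω (t+1)) *
     M.trans1 (X0v ω t) (X1v ω t) (U1v ω t) (X1v ω (t+1)) *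
     M.trans2 (X0v ω t) (X2v ω t) (U2v ω t) (X2v ω (t+1))))

/-- Probability of an event (a set of trajectories). -/
noncomputable def pr (σ : TeamStrategy M) {A : Type _} (γ : AdvStrategy M A)
    (iap : ℕ → Traj M → A) (E : Traj M → Prop) : ℝ :=
  ∑ ω : Traj M, if E ω then prob σ γ iap ω else 0

/-- Conditional probability `P(F | E)`. -/
noncomputable def cpr (σ : TeamStrategy M) {A : Type _} (γ : AdvStrategy M A)
    (iap : ℕ → Traj M → A) (E F : Traj M → Prop) : ℝ :=
  pr σ γ iap (fun ω => F ω ∧ E ω) / pr σ γ iap E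

/-- Total cost `Σ_t c_t(X⁰_t,X_t,U_t,Uᵃ_t) + ρ(X⁰_t,X_t) 1{M^or_t = 1}` along a trajectory. -/
noncomputable def totalCost (ω : Traj M) : ℝ :=
  ∑ t ∈ Finset.range M.T,
    (M.cost t (X0v ω t) (X1v ω t, X2v ω t) (U1v ω t, U2v ω t) (UAv ω t) +
     (if (M1v ω t || M2v ω t) then M.commCost (X0v ω t) (X1v ω t, X2v ω t) else 0))

/-- Expected total cost `J((f,g),gᵃ)`. -/
noncomputable def J (σ : TeamStrategy M) {A : Type _} (γ : AdvStrategy M A)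
    (iap : ℕ → Traj M → A) : ℝ :=
  ∑ ω : Traj M, prob σ γ iap ω * totalCost ω

end TA

namespace TA

/-- The open-loop adversary strategy that deterministically plays the given sequence of
actions (used to define strategy-independent conditional distributions). -/
noncomputable def openLoop (M : Model) (A : Type _) (us : List M.Ua) : AdvStrategy M A where
  ga := fun t _ u => if u = us.getD t (Classical.arbitrary M.Ua) then 1 else 0
  ga_nonneg := by
    intro t a u
    try dsimp only
    split <;> norm_num
  ga_sum := by
    intro t a
    simp

/-- The uniform density on the space of realizations `(x_{1:t}, u_{1:t-1}, m_t)`. -/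
noncomputable def unifComm (M : Model) (t : ℕ) : ℝ :=
  ((Fintype.card M.X1 * Fintype.card M.X2 : ℝ))⁻¹ ^ (t+1) *
  ((Fintype.card M.U1 * Fintype.card M.U2 : ℝ))⁻¹ ^ t * (4 : ℝ)⁻¹

/-- The uniform density on the space of realizations `(x_{1:t}, u_{1:t})`. -/
noncomputable def unifCtrl (M : Model) (t : ℕ) : ℝ :=
  ((Fintype.card M.X1 * Fintype.card M.X2 : ℝ))⁻¹ ^ (t+1) *
  ((Fintype.card M.U1 * Fintype.card M.U2 : ℝ))⁻¹ ^ (t+1)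

/-- In the maximal-information structure, `Iᵃ_t = I¹_t ∩ I²_t = C^team_t`; a realization
`ι` of `Iᵃ_t` contains the list `uᵃ_{1:t-1}` of past adversary actions, from which the
open-loop strategy `hᵃ` is built. -/
noncomputable def advOpen (M : Model) (ι : HistC M) : AdvStrategy M (HistC M) :=
  openLoop M (HistC M) ι.2.2.2.1

/-- `Ψ_t(ι; x_{1:t}, u_{1:t-1}, m_t)`: the conditional distribution of states, past team
actions and current communication decisions given `Iᵃ_t = ι`, computed under the team
strategy `σ` and the open-loop adversary strategy induced by `ι` (and set to the
uniform distribution when `ι` is infeasible). -/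
noncomputable def Psi {M : Model} (σ : TeamStrategy M) (t : ℕ) (ι : HistC M)
    (ξ1 : List M.X1) (ξ2 : List M.X2) (υ1 : List M.U1) (υ2 : List M.U2)
    (mt : Bool × Bool) : ℝ :=
  if 0 < pr σ (advOpen M ι) teamComP (fun ω => teamCom t ω = ι) then
    cpr σ (advOpen M ι) teamComP (fun ω => teamCom t ω = ι)
      (fun ω => pre (t+1) (X1v ω) = ξ1 ∧ pre (t+1) (X2v ω) = ξ2 ∧
                pre t (U1v ω) = υ1 ∧ pre t (U2v ω) = υ2 ∧ Mv ω t = mt)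
  else unifComm M t

/-- `Ψ_{t⁺}(ι; x_{1:t}, u_{1:t})`: the analogous conditional distribution given
`Iᵃ_{t⁺} = ι`. -/
noncomputable def PsiP {M : Model} (σ : TeamStrategy M) (t : ℕ) (ι : HistC M)
    (ξ1 : List M.X1) (ξ2 : List M.X2) (υ1 : List M.U1) (υ2 : List M.U2) : ℝ :=
  if 0 < pr σ (advOpen M ι) teamComP (fun ω => teamComP t ω = ι) then
    cpr σ (advOpen M ι) teamComP (fun ω => teamComP t ω = ι)
      (fun ω => pre (t+1) (X1v ω) = ξ1 ∧ pre (t+1) (X2v ω) = ξ2 ∧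
                pre (t+1) (U1v ω) = υ1 ∧ pre (t+1) (U2v ω) = υ2)
  else unifCtrl M t

end TA

/-!
Under any team strategy the law of a trajectory factors, stage by stage, into a common factor
(global state, erasure channel, observation, adversary) and one factor per agent, which involves
only that agent's local states, decisions and actions together with the common history. Given the
common information the two private histories are therefore independent, and their joint weight
does not depend on the adversary. The expected cost of a stage thus sees the team strategy only
through each agent's *reach weights*: the total weight of its private histories that reach local
state `a` and then communicate `m` or act `b`. The lumped strategy plays, at `(Xⁱ_t, Iᵃ_t)`, the
ratio of these weights, i.e. the conditional law of the original decision given the local state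
and the common information; a forward induction over the stages shows that it reproduces all
reach weights, hence every expected stage cost, against every adversary strategy. The stages
after the one whose cost is taken integrate out, as all kernels are stochastic.
-/

/-- A lawful lens: `Γ` splits as "the rest" times a coordinate in `β`, read by `get` and
overwritten by `set`. -/
structure Lens (Γ β : Type*) where
  get : Γ → β
  set : Γ → β → Γ
  get_set : ∀ ω b, get (set ω b) = b
  set_get : ∀ ω, set ω (get ω) = ω
  set_set : ∀ ω b c, set (set ω b) c = set ω c

namespace Lens

variable {Γ β : Type*} [Fintype Γ] [Fintype β] (l : Lens Γ β)

lemma sum_sum_set (g : Γ → ℝ) :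
    ∑ ω, ∑ b, g (l.set ω b) = (Fintype.card β : ℝ) * ∑ ω, g ω := by
  have e : Function.Involutive (fun p : Γ × β => (l.set p.1 p.2, l.get p.1)) := by
    intro p
    simp [l.set_set, l.set_get, l.get_set]
  calc ∑ ω, ∑ b, g (l.set ω b) = ∑ p : Γ × β, g (l.set p.1 p.2) := by
        rw [Fintype.sum_prod_type]
    _ = ∑ p : Γ × β, g p.1 := Equiv.sum_comp e.toPerm (fun p : Γ × β => g p.1)
    _ = (Fintype.card β : ℝ) * ∑ ω, g ω := by
        rw [Fintype.sum_prod_type, Finset.mul_sum]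
        simp

lemma sum_eq_inv_card_mul_sum_sum_set [Nonempty β] (g : Γ → ℝ) :
    ∑ ω, g ω = (Fintype.card β : ℝ)⁻¹ * ∑ ω, ∑ b, g (l.set ω b) := by
  rw [l.sum_sum_set g, inv_mul_cancel_left₀ (by simp [Fintype.card_ne_zero])]

lemma sum_mul_of_sum_set_eq_one [Nonempty β] (P k : Γ → ℝ)
    (hP : ∀ ω b, P (l.set ω b) = P ω) (hk : ∀ ω, ∑ b, k (l.set ω b) = 1) :
    ∑ ω, P ω * k ω = (Fintype.card β : ℝ)⁻¹ * ∑ ω, P ω := by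
  rw [l.sum_eq_inv_card_mul_sum_sum_set]
  simp only [hP, ← Finset.mul_sum, hk, mul_one]

lemma sum_mul_indicator_get [Nonempty β] (g : Γ → ℝ) (hg : ∀ ω b, g (l.set ω b) = g ω)
    (v : β) :
    ∑ ω, g ω * (if l.get ω = v then 1 else 0) =
      (Fintype.card β : ℝ)⁻¹ * ∑ ω, g ω := by
  rw [l.sum_eq_inv_card_mul_sum_sum_set]
  simp [hg, l.get_set]

end Lens

lemma Fintype.sum_mul_eq_sum_sum_fiber {Γ α β : Type*} [Fintype Γ] [Fintype α] [Fintype β]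
    (g : Γ → ℝ) (f : Γ → α) (h : Γ → β) (Ψ : α → β → ℝ) :
    ∑ ω, g ω * Ψ (f ω) (h ω) =
      ∑ a, ∑ b,
        (∑ ω, g ω * (if f ω = a then 1 else 0) * (if h ω = b then 1 else 0)) * Ψ a b := by
  have hω : ∀ ω, g ω * Ψ (f ω) (h ω) = ∑ a, ∑ b,
      g ω * (if f ω = a then 1 else 0) * (if h ω = b then 1 else 0) * Ψ a b := fun ω => by
    simp [ite_mul, mul_ite]
  simp only [hω, Finset.sum_mul]
  rw [Finset.sum_comm]
  exact Finset.sum_congr rfl fun a _ => Finset.sum_comm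

namespace TA

variable {M : Model}

lemma idx_of_lt {t : ℕ} (h : t < M.T) : idx M t = ⟨t, h⟩ := dif_pos h

lemma idx_ne_idx {s n : ℕ} (hs : s < M.T) (hn : n < M.T) (h : s ≠ n) :
    idx M s ≠ idx M n := by
  simp [idx_of_lt hs, idx_of_lt hn, Fin.ext_iff, h]

lemma pre_congr {α : Type*} {t : ℕ} {f g : ℕ → α} (h : ∀ s, s < t → f s = g s) :
    pre t f = pre t g :=
  List.map_congr_left fun s hs => h s (List.mem_range.mp hs)

lemma pre_succ {α : Type*} (f : ℕ → α) (t : ℕ) : pre (t+1) f = pre t f ++ [f t] := by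
  simp [pre, List.range_succ]

lemma pre_getD_of_lt {α : Type*} {t s : ℕ} (hs : s < t) (f : ℕ → α) (d : α) :
    (pre t f).getD s d = f s := by
  simp [pre, List.getD_eq_getElem?_getD, hs]

/-! ## Coordinates of a trajectory -/

/-- The variables generated at a stage after the states: `(M¹, M², Z^er, Y, U¹, U², Uᵃ)`. -/
abbrev StageVars (M : Model) :=
  Bool × Bool × Option (M.X1 × M.X2) × M.Y × M.U1 × M.U2 × M.Ua
abbrev StateVars (M : Model) := M.X0 × M.X1 × M.X2
abbrev PrivPath1 (M : Model) := (Fin M.T → M.X1) × (Fin M.T → M.U1)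
abbrev PrivPath2 (M : Model) := (Fin M.T → M.X2) × (Fin M.T → M.U2)

def setStage (n : ℕ) (ω : Traj M) (b : StageVars M) : Traj M :=
  (ω.1, ω.2.1, ω.2.2.1,
   Function.update ω.2.2.2.1 (idx M n) b.1,
   Function.update ω.2.2.2.2.1 (idx M n) b.2.1,
   Function.update ω.2.2.2.2.2.1 (idx M n) b.2.2.1,
   Function.update ω.2.2.2.2.2.2.1 (idx M n) b.2.2.2.1,
   Function.update ω.2.2.2.2.2.2.2.1 (idx M n) b.2.2.2.2.1,
   Function.update ω.2.2.2.2.2.2.2.2.1 (idx M n) b.2.2.2.2.2.1,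
   Function.update ω.2.2.2.2.2.2.2.2.2 (idx M n) b.2.2.2.2.2.2)

def stageLens (n : ℕ) : Lens (Traj M) (StageVars M) where
  get ω := (M1v ω n, M2v ω n, Zv ω n, Yv ω n, U1v ω n, U2v ω n, UAv ω n)
  set := setStage n
  get_set ω b := by simp [setStage, M1v, M2v, Zv, Yv, U1v, U2v, UAv]
  set_get ω := by simp [setStage, M1v, M2v, Zv, Yv, U1v, U2v, UAv]
  set_set ω b c := by simp [setStage]

def setState (n : ℕ) (ω : Traj M) (b : StateVars M) : Traj M :=
  (Function.update ω.1 (idx M n) b.1,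
   Function.update ω.2.1 (idx M n) b.2.1,
   Function.update ω.2.2.1 (idx M n) b.2.2, ω.2.2.2)

def stateLens (n : ℕ) : Lens (Traj M) (StateVars M) where
  get ω := (X0v ω n, X1v ω n, X2v ω n)
  set := setState n
  get_set ω b := by simp [setState, X0v, X1v, X2v]
  set_get ω := by simp [setState, X0v, X1v, X2v]
  set_set ω b c := by simp [setState]

def setAdv (n : ℕ) (ω : Traj M) (u : M.Ua) : Traj M :=
  (ω.1, ω.2.1, ω.2.2.1, ω.2.2.2.1, ω.2.2.2.2.1, ω.2.2.2.2.2.1,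
   ω.2.2.2.2.2.2.1, ω.2.2.2.2.2.2.2.1, ω.2.2.2.2.2.2.2.2.1,
   Function.update ω.2.2.2.2.2.2.2.2.2 (idx M n) u)

@[simp] lemma UAv_setAdv (n : ℕ) (ω : Traj M) (u : M.Ua) : UAv (setAdv n ω u) n = u := by
  simp [setAdv, UAv]

def advLens (n : ℕ) : Lens (Traj M) M.Ua where
  get ω := UAv ω n
  set := setAdv n
  get_set := UAv_setAdv n
  set_get ω := by simp [setAdv, UAv]
  set_set ω b c := by simp [setAdv]

/-- Replace agent 1's private path `(X¹_{1:T}, U¹_{1:T})`. -/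
def setPriv1 (ω : Traj M) (p : PrivPath1 M) : Traj M :=
  (ω.1, p.1, ω.2.2.1, ω.2.2.2.1, ω.2.2.2.2.1, ω.2.2.2.2.2.1,
   ω.2.2.2.2.2.2.1, p.2, ω.2.2.2.2.2.2.2.2.1, ω.2.2.2.2.2.2.2.2.2)

def priv1Lens : Lens (Traj M) (PrivPath1 M) where
  get ω := (ω.2.1, ω.2.2.2.2.2.2.2.1)
  set := setPriv1
  get_set _ _ := rfl
  set_get _ := rfl
  set_set _ _ _ := rfl

def setPriv2 (ω : Traj M) (p : PrivPath2 M) : Traj M :=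
  (ω.1, ω.2.1, p.1, ω.2.2.2.1, ω.2.2.2.2.1, ω.2.2.2.2.2.1,
   ω.2.2.2.2.2.2.1, ω.2.2.2.2.2.2.2.1, p.2, ω.2.2.2.2.2.2.2.2.2)

def priv2Lens : Lens (Traj M) (PrivPath2 M) where
  get ω := (ω.2.2.1, ω.2.2.2.2.2.2.2.2.1)
  set := setPriv2
  get_set _ _ := rfl
  set_get _ := rfl
  set_set _ _ _ := rfl

section PrivPathLenses

variable {X U : Type*}

def setPrivX (n : ℕ) (p : (Fin M.T → X) × (Fin M.T → U)) (a : X) :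
    (Fin M.T → X) × (Fin M.T → U) :=
  (Function.update p.1 (idx M n) a, p.2)

def setPrivU (n : ℕ) (p : (Fin M.T → X) × (Fin M.T → U)) (b : U) :
    (Fin M.T → X) × (Fin M.T → U) :=
  (p.1, Function.update p.2 (idx M n) b)

def privXLens (n : ℕ) : Lens ((Fin M.T → X) × (Fin M.T → U)) X where
  get p := p.1 (idx M n)
  set := setPrivX n
  get_set p a := by simp [setPrivX]
  set_get p := by simp [setPrivX]
  set_set p a b := by simp [setPrivX]

def privULens (n : ℕ) : Lens ((Fin M.T → X) × (Fin M.T → U)) U where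
  get p := p.2 (idx M n)
  set := setPrivU n
  get_set p a := by simp [setPrivU]
  set_get p := by simp [setPrivU]
  set_set p a b := by simp [setPrivU]

end PrivPathLenses

@[simp] lemma X0v_setStage (n : ℕ) (ω : Traj M) (b : StageVars M) (s : ℕ) :
    X0v (setStage n ω b) s = X0v ω s := rfl
@[simp] lemma X1v_setStage (n : ℕ) (ω : Traj M) (b : StageVars M) (s : ℕ) :
    X1v (setStage n ω b) s = X1v ω s := rfl
@[simp] lemma X2v_setStage (n : ℕ) (ω : Traj M) (b : StageVars M) (s : ℕ) :
    X2v (setStage n ω b) s = X2v ω s := rfl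
@[simp] lemma M1v_setStage_self (n : ℕ) (ω : Traj M) (b : StageVars M) :
    M1v (setStage n ω b) n = b.1 := by simp [M1v, setStage]
@[simp] lemma M2v_setStage_self (n : ℕ) (ω : Traj M) (b : StageVars M) :
    M2v (setStage n ω b) n = b.2.1 := by simp [M2v, setStage]
@[simp] lemma Zv_setStage_self (n : ℕ) (ω : Traj M) (b : StageVars M) :
    Zv (setStage n ω b) n = b.2.2.1 := by simp [Zv, setStage]
@[simp] lemma Yv_setStage_self (n : ℕ) (ω : Traj M) (b : StageVars M) :
    Yv (setStage n ω b) n = b.2.2.2.1 := by simp [Yv, setStage]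
@[simp] lemma U1v_setStage_self (n : ℕ) (ω : Traj M) (b : StageVars M) :
    U1v (setStage n ω b) n = b.2.2.2.2.1 := by simp [U1v, setStage]
@[simp] lemma U2v_setStage_self (n : ℕ) (ω : Traj M) (b : StageVars M) :
    U2v (setStage n ω b) n = b.2.2.2.2.2.1 := by simp [U2v, setStage]
@[simp] lemma UAv_setStage_self (n : ℕ) (ω : Traj M) (b : StageVars M) :
    UAv (setStage n ω b) n = b.2.2.2.2.2.2 := by simp [UAv, setStage]

lemma M1v_setStage_of_ne {s n : ℕ} (hs : s < M.T) (hn : n < M.T) (h : s ≠ n)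
    (ω : Traj M) (b : StageVars M) : M1v (setStage n ω b) s = M1v ω s := by
  simp [M1v, setStage, Function.update_of_ne (idx_ne_idx hs hn h)]
lemma M2v_setStage_of_ne {s n : ℕ} (hs : s < M.T) (hn : n < M.T) (h : s ≠ n)
    (ω : Traj M) (b : StageVars M) : M2v (setStage n ω b) s = M2v ω s := by
  simp [M2v, setStage, Function.update_of_ne (idx_ne_idx hs hn h)]
lemma Zv_setStage_of_ne {s n : ℕ} (hs : s < M.T) (hn : n < M.T) (h : s ≠ n)
    (ω : Traj M) (b : StageVars M) : Zv (setStage n ω b) s = Zv ω s := by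
  simp [Zv, setStage, Function.update_of_ne (idx_ne_idx hs hn h)]
lemma Yv_setStage_of_ne {s n : ℕ} (hs : s < M.T) (hn : n < M.T) (h : s ≠ n)
    (ω : Traj M) (b : StageVars M) : Yv (setStage n ω b) s = Yv ω s := by
  simp [Yv, setStage, Function.update_of_ne (idx_ne_idx hs hn h)]
lemma U1v_setStage_of_ne {s n : ℕ} (hs : s < M.T) (hn : n < M.T) (h : s ≠ n)
    (ω : Traj M) (b : StageVars M) : U1v (setStage n ω b) s = U1v ω s := by
  simp [U1v, setStage, Function.update_of_ne (idx_ne_idx hs hn h)]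
lemma U2v_setStage_of_ne {s n : ℕ} (hs : s < M.T) (hn : n < M.T) (h : s ≠ n)
    (ω : Traj M) (b : StageVars M) : U2v (setStage n ω b) s = U2v ω s := by
  simp [U2v, setStage, Function.update_of_ne (idx_ne_idx hs hn h)]
lemma UAv_setStage_of_ne {s n : ℕ} (hs : s < M.T) (hn : n < M.T) (h : s ≠ n)
    (ω : Traj M) (b : StageVars M) : UAv (setStage n ω b) s = UAv ω s := by
  simp [UAv, setStage, Function.update_of_ne (idx_ne_idx hs hn h)]

@[simp] lemma U1v_setState (n : ℕ) (ω : Traj M) (b : StateVars M) (s : ℕ) :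
    U1v (setState n ω b) s = U1v ω s := rfl
@[simp] lemma U2v_setState (n : ℕ) (ω : Traj M) (b : StateVars M) (s : ℕ) :
    U2v (setState n ω b) s = U2v ω s := rfl
@[simp] lemma UAv_setState (n : ℕ) (ω : Traj M) (b : StateVars M) (s : ℕ) :
    UAv (setState n ω b) s = UAv ω s := rfl
@[simp] lemma X0v_setState_self (n : ℕ) (ω : Traj M) (b : StateVars M) :
    X0v (setState n ω b) n = b.1 := by simp [X0v, setState]
@[simp] lemma X1v_setState_self (n : ℕ) (ω : Traj M) (b : StateVars M) :
    X1v (setState n ω b) n = b.2.1 := by simp [X1v, setState]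
@[simp] lemma X2v_setState_self (n : ℕ) (ω : Traj M) (b : StateVars M) :
    X2v (setState n ω b) n = b.2.2 := by simp [X2v, setState]
lemma X0v_setState_of_ne {s n : ℕ} (hs : s < M.T) (hn : n < M.T) (h : s ≠ n)
    (ω : Traj M) (b : StateVars M) : X0v (setState n ω b) s = X0v ω s := by
  simp [X0v, setState, Function.update_of_ne (idx_ne_idx hs hn h)]
lemma X1v_setState_of_ne {s n : ℕ} (hs : s < M.T) (hn : n < M.T) (h : s ≠ n)
    (ω : Traj M) (b : StateVars M) : X1v (setState n ω b) s = X1v ω s := by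
  simp [X1v, setState, Function.update_of_ne (idx_ne_idx hs hn h)]
lemma X2v_setState_of_ne {s n : ℕ} (hs : s < M.T) (hn : n < M.T) (h : s ≠ n)
    (ω : Traj M) (b : StateVars M) : X2v (setState n ω b) s = X2v ω s := by
  simp [X2v, setState, Function.update_of_ne (idx_ne_idx hs hn h)]

lemma UAv_setAdv_of_ne {s n : ℕ} (hs : s < M.T) (hn : n < M.T) (h : s ≠ n)
    (ω : Traj M) (b : M.Ua) : UAv (setAdv n ω b) s = UAv ω s := by
  simp [UAv, setAdv, Function.update_of_ne (idx_ne_idx hs hn h)]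

@[simp] lemma X0v_setPriv1 (ω : Traj M) (p : PrivPath1 M) (s : ℕ) :
    X0v (setPriv1 ω p) s = X0v ω s := rfl
@[simp] lemma M1v_setPriv1 (ω : Traj M) (p : PrivPath1 M) (s : ℕ) :
    M1v (setPriv1 ω p) s = M1v ω s := rfl
lemma X1v_setPriv1 (ω : Traj M) (p : PrivPath1 M) (s : ℕ) :
    X1v (setPriv1 ω p) s = p.1 (idx M s) := rfl
lemma U1v_setPriv1 (ω : Traj M) (p : PrivPath1 M) (s : ℕ) :
    U1v (setPriv1 ω p) s = p.2 (idx M s) := rfl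

@[simp] lemma X0v_setPriv2 (ω : Traj M) (p : PrivPath2 M) (s : ℕ) :
    X0v (setPriv2 ω p) s = X0v ω s := rfl
@[simp] lemma M2v_setPriv2 (ω : Traj M) (p : PrivPath2 M) (s : ℕ) :
    M2v (setPriv2 ω p) s = M2v ω s := rfl
lemma X2v_setPriv2 (ω : Traj M) (p : PrivPath2 M) (s : ℕ) :
    X2v (setPriv2 ω p) s = p.1 (idx M s) := rfl
lemma U2v_setPriv2 (ω : Traj M) (p : PrivPath2 M) (s : ℕ) :
    U2v (setPriv2 ω p) s = p.2 (idx M s) := rfl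

/-! ## The law of a trajectory -/

/-- The erasure channel's law of `Z^er_s` up to the consistency of a delivered message with
the local states, which `zMatch1` and `zMatch2` check (`zKer_eq_mul`). -/
noncomputable def erasureWeight (ω : Traj M) (s : ℕ) : ℝ :=
  if Mv ω s = (false, false) then (if Zv ω s = none then 1 else 0)
  else
    match Zv ω s with
    | none => M.pe (X0v ω s)
    | some _ => 1 - M.pe (X0v ω s)

noncomputable def zMatch1 (ω : Traj M) (s : ℕ) : ℝ :=
  match Zv ω s with
  | none => 1
  | some q => if q.1 = X1v ω s then 1 else 0

noncomputable def zMatch2 (ω : Traj M) (s : ℕ) : ℝ :=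
  match Zv ω s with
  | none => 1
  | some q => if q.2 = X2v ω s then 1 else 0

lemma zKer_eq_mul (ω : Traj M) (s : ℕ) :
    zKer M (X0v ω s) (Mv ω s) (X1v ω s, X2v ω s) (Zv ω s) =
      erasureWeight ω s * zMatch1 ω s * zMatch2 ω s := by
  unfold zKer erasureWeight zMatch1 zMatch2
  cases Zv ω s with
  | none => simp
  | some x =>
    by_cases hm : Mv ω s = (false, false)
    · simp [hm]
    · by_cases h1 : x.1 = X1v ω s <;> by_cases h2 : x.2 = X2v ω s <;>
        simp [hm, h1, h2, Prod.ext_iff]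

lemma zKer_sum (x0 : M.X0) (m : Bool × Bool) (x : M.X1 × M.X2) :
    ∑ z : Option (M.X1 × M.X2), zKer M x0 m x z = 1 := by
  unfold zKer
  by_cases hm : m = (false, false)
  · simp [hm]
  · simp only [hm, if_false]
    rw [Fintype.sum_option]
    simp [Finset.sum_ite_eq']

noncomputable def teamKernel (σ : TeamStrategy M) (t : ℕ) (ω : Traj M) : ℝ :=
  σ.f1 t (info1 t ω) (M1v ω t) * σ.f2 t (info2 t ω) (M2v ω t) *
  zKer M (X0v ω t) (Mv ω t) (X1v ω t, X2v ω t) (Zv ω t) *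
  M.obs (Zv ω t) (Mv ω t) (X0v ω t) (Yv ω t) *
  σ.g1 t (info1p t ω) (U1v ω t) * σ.g2 t (info2p t ω) (U2v ω t)

noncomputable def stageKernel (σ : TeamStrategy M) (γ : AdvStrategy M (HistC M))
    (s : ℕ) (ω : Traj M) : ℝ :=
  teamKernel σ s ω * γ.ga s (teamComP s ω) (UAv ω s)

noncomputable def transKernel (s : ℕ) (ω : Traj M) : ℝ :=
  M.trans0 (X0v ω s) (UAv ω s) (X0v ω (s+1)) *
  M.trans1 (X0v ω s) (X1v ω s) (U1v ω s) (X1v ω (s+1)) *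
  M.trans2 (X0v ω s) (X2v ω s) (U2v ω s) (X2v ω (s+1))

noncomputable def transFactor (s : ℕ) (ω : Traj M) : ℝ :=
  if s + 1 < M.T then transKernel s ω else 1

noncomputable def stageFactor (σ : TeamStrategy M) (γ : AdvStrategy M (HistC M))
    (s : ℕ) (ω : Traj M) : ℝ := stageKernel σ γ s ω * transFactor s ω

noncomputable def initWeight (ω : Traj M) : ℝ :=
  M.init0 (X0v ω 0) * M.init1 (X1v ω 0) * M.init2 (X2v ω 0)

noncomputable def prefixProb (σ : TeamStrategy M) (γ : AdvStrategy M (HistC M))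
    (n : ℕ) (ω : Traj M) : ℝ :=
  initWeight ω * ∏ s ∈ Finset.range n, stageFactor σ γ s ω

lemma prob_eq_prefixProb (σ : TeamStrategy M) (γ : AdvStrategy M (HistC M)) (ω : Traj M) :
    prob σ γ teamComP ω = prefixProb σ γ M.T ω := by
  have h1 : (∏ s ∈ Finset.range M.T, stageFactor σ γ s ω) =
      (∏ s ∈ Finset.range M.T, stageKernel σ γ s ω) *
        (∏ s ∈ Finset.range M.T, transFactor s ω) :=
    Finset.prod_mul_distrib
  have h2 : (∏ s ∈ Finset.range M.T, transFactor s ω) =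
      ∏ s ∈ Finset.range (M.T - 1), transKernel s ω := by
    have hT : M.T - 1 + 1 = M.T := Nat.succ_pred_eq_of_pos M.hT
    rw [← hT, Finset.prod_range_succ]
    have hlast : ¬ (M.T - 1 + 1 < M.T) := by omega
    rw [show transFactor (M.T - 1) ω = 1 from by simp [transFactor, hlast], mul_one]
    apply Finset.prod_congr rfl
    intro s hs
    have : s + 1 < M.T := by
      have := Finset.mem_range.mp hs
      omega
    simp [transFactor, this]
  unfold prob prefixProb
  rw [h1, h2]
  unfold initWeight stageKernel teamKernel transKernel
  ring

noncomputable def stageCost (t : ℕ) (ω : Traj M) : ℝ :=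
  M.cost t (X0v ω t) (X1v ω t, X2v ω t) (U1v ω t, U2v ω t) (UAv ω t) +
    (if (M1v ω t || M2v ω t) then M.commCost (X0v ω t) (X1v ω t, X2v ω t) else 0)

lemma J_eq_sum_prefixProb_mul_stageCost (σ : TeamStrategy M) (γ : AdvStrategy M (HistC M)) :
    J σ γ teamComP =
      ∑ t ∈ Finset.range M.T, ∑ ω : Traj M, prefixProb σ γ M.T ω * stageCost t ω := by
  simp only [J, totalCost, prob_eq_prefixProb, Finset.mul_sum]
  rw [Finset.sum_comm]
  rfl

/-! ## Integrating out future stages -/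

lemma Mv_congr {t : ℕ} {ω ω' : Traj M} (h1 : M1v ω t = M1v ω' t)
    (h2 : M2v ω t = M2v ω' t) : Mv ω t = Mv ω' t := by
  rw [Mv, Mv, h1, h2]

lemma info1_congr {t : ℕ} {ω ω' : Traj M}
    (h0 : ∀ s, s ≤ t → X0v ω s = X0v ω' s)
    (h1 : ∀ s, s ≤ t → X1v ω s = X1v ω' s)
    (hu : ∀ s, s < t → U1v ω s = U1v ω' s)
    (hm1 : ∀ s, s < t → M1v ω s = M1v ω' s)
    (hm2 : ∀ s, s < t → M2v ω s = M2v ω' s)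
    (hz : ∀ s, s < t → Zv ω s = Zv ω' s)
    (hua : ∀ s, s < t → UAv ω s = UAv ω' s)
    (hy : ∀ s, s < t → Yv ω s = Yv ω' s) :
    info1 t ω = info1 t ω' := by
  unfold info1
  simp only [Prod.mk.injEq]
  exact ⟨pre_congr (fun s hs => h0 s (Nat.lt_succ_iff.mp hs)),
    pre_congr (fun s hs => h1 s (Nat.lt_succ_iff.mp hs)),
    pre_congr hu,
    pre_congr (fun s hs => Mv_congr (hm1 s hs) (hm2 s hs)),
    pre_congr hz, pre_congr hua, pre_congr hy⟩

lemma info2_congr {t : ℕ} {ω ω' : Traj M}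
    (h0 : ∀ s, s ≤ t → X0v ω s = X0v ω' s)
    (h2 : ∀ s, s ≤ t → X2v ω s = X2v ω' s)
    (hu : ∀ s, s < t → U2v ω s = U2v ω' s)
    (hm1 : ∀ s, s < t → M1v ω s = M1v ω' s)
    (hm2 : ∀ s, s < t → M2v ω s = M2v ω' s)
    (hz : ∀ s, s < t → Zv ω s = Zv ω' s)
    (hua : ∀ s, s < t → UAv ω s = UAv ω' s)
    (hy : ∀ s, s < t → Yv ω s = Yv ω' s) :
    info2 t ω = info2 t ω' := by
  unfold info2
  simp only [Prod.mk.injEq]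
  exact ⟨pre_congr (fun s hs => h0 s (Nat.lt_succ_iff.mp hs)),
    pre_congr (fun s hs => h2 s (Nat.lt_succ_iff.mp hs)),
    pre_congr hu,
    pre_congr (fun s hs => Mv_congr (hm1 s hs) (hm2 s hs)),
    pre_congr hz, pre_congr hua, pre_congr hy⟩

lemma info1p_congr {t : ℕ} {ω ω' : Traj M}
    (h0 : ∀ s, s ≤ t → X0v ω s = X0v ω' s)
    (h1 : ∀ s, s ≤ t → X1v ω s = X1v ω' s)
    (hu : ∀ s, s < t → U1v ω s = U1v ω' s)
    (hm1 : ∀ s, s ≤ t → M1v ω s = M1v ω' s)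
    (hm2 : ∀ s, s ≤ t → M2v ω s = M2v ω' s)
    (hz : ∀ s, s ≤ t → Zv ω s = Zv ω' s)
    (hua : ∀ s, s < t → UAv ω s = UAv ω' s)
    (hy : ∀ s, s ≤ t → Yv ω s = Yv ω' s) :
    info1p t ω = info1p t ω' := by
  unfold info1p
  simp only [Prod.mk.injEq]
  exact ⟨pre_congr (fun s hs => h0 s (Nat.lt_succ_iff.mp hs)),
    pre_congr (fun s hs => h1 s (Nat.lt_succ_iff.mp hs)),
    pre_congr hu,
    pre_congr (fun s hs =>
      Mv_congr (hm1 s (Nat.lt_succ_iff.mp hs)) (hm2 s (Nat.lt_succ_iff.mp hs))),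
    pre_congr (fun s hs => hz s (Nat.lt_succ_iff.mp hs)),
    pre_congr hua,
    pre_congr (fun s hs => hy s (Nat.lt_succ_iff.mp hs))⟩

lemma info2p_congr {t : ℕ} {ω ω' : Traj M}
    (h0 : ∀ s, s ≤ t → X0v ω s = X0v ω' s)
    (h2 : ∀ s, s ≤ t → X2v ω s = X2v ω' s)
    (hu : ∀ s, s < t → U2v ω s = U2v ω' s)
    (hm1 : ∀ s, s ≤ t → M1v ω s = M1v ω' s)
    (hm2 : ∀ s, s ≤ t → M2v ω s = M2v ω' s)
    (hz : ∀ s, s ≤ t → Zv ω s = Zv ω' s)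
    (hua : ∀ s, s < t → UAv ω s = UAv ω' s)
    (hy : ∀ s, s ≤ t → Yv ω s = Yv ω' s) :
    info2p t ω = info2p t ω' := by
  unfold info2p
  simp only [Prod.mk.injEq]
  exact ⟨pre_congr (fun s hs => h0 s (Nat.lt_succ_iff.mp hs)),
    pre_congr (fun s hs => h2 s (Nat.lt_succ_iff.mp hs)),
    pre_congr hu,
    pre_congr (fun s hs =>
      Mv_congr (hm1 s (Nat.lt_succ_iff.mp hs)) (hm2 s (Nat.lt_succ_iff.mp hs))),
    pre_congr (fun s hs => hz s (Nat.lt_succ_iff.mp hs)),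
    pre_congr hua,
    pre_congr (fun s hs => hy s (Nat.lt_succ_iff.mp hs))⟩

lemma teamComP_congr {t : ℕ} {ω ω' : Traj M}
    (h0 : ∀ s, s ≤ t → X0v ω s = X0v ω' s)
    (hm1 : ∀ s, s ≤ t → M1v ω s = M1v ω' s)
    (hm2 : ∀ s, s ≤ t → M2v ω s = M2v ω' s)
    (hz : ∀ s, s ≤ t → Zv ω s = Zv ω' s)
    (hua : ∀ s, s < t → UAv ω s = UAv ω' s)
    (hy : ∀ s, s ≤ t → Yv ω s = Yv ω' s) :
    teamComP t ω = teamComP t ω' := by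
  unfold teamComP
  simp only [Prod.mk.injEq]
  exact ⟨pre_congr (fun s hs => h0 s (Nat.lt_succ_iff.mp hs)),
    pre_congr (fun s hs =>
      Mv_congr (hm1 s (Nat.lt_succ_iff.mp hs)) (hm2 s (Nat.lt_succ_iff.mp hs))),
    pre_congr (fun s hs => hz s (Nat.lt_succ_iff.mp hs)),
    pre_congr hua,
    pre_congr (fun s hs => hy s (Nat.lt_succ_iff.mp hs))⟩

structure AgreeUpTo (n : ℕ) (ω ω' : Traj M) : Prop where
  x0 : ∀ s, s ≤ n → X0v ω s = X0v ω' s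
  x1 : ∀ s, s ≤ n → X1v ω s = X1v ω' s
  x2 : ∀ s, s ≤ n → X2v ω s = X2v ω' s
  m1 : ∀ s, s < n → M1v ω s = M1v ω' s
  m2 : ∀ s, s < n → M2v ω s = M2v ω' s
  z : ∀ s, s < n → Zv ω s = Zv ω' s
  y : ∀ s, s < n → Yv ω s = Yv ω' s
  u1 : ∀ s, s < n → U1v ω s = U1v ω' s
  u2 : ∀ s, s < n → U2v ω s = U2v ω' s
  ua : ∀ s, s < n → UAv ω s = UAv ω' s

lemma AgreeUpTo.mono {m n : ℕ} {ω ω' : Traj M} (h : AgreeUpTo n ω ω') (hmn : m ≤ n) :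
    AgreeUpTo m ω ω' where
  x0 s hs := h.x0 s (hs.trans hmn)
  x1 s hs := h.x1 s (hs.trans hmn)
  x2 s hs := h.x2 s (hs.trans hmn)
  m1 s hs := h.m1 s (hs.trans_le hmn)
  m2 s hs := h.m2 s (hs.trans_le hmn)
  z s hs := h.z s (hs.trans_le hmn)
  y s hs := h.y s (hs.trans_le hmn)
  u1 s hs := h.u1 s (hs.trans_le hmn)
  u2 s hs := h.u2 s (hs.trans_le hmn)
  ua s hs := h.ua s (hs.trans_le hmn)

def Adapted (n : ℕ) (H : Traj M → ℝ) : Prop :=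
  ∀ ω ω' : Traj M, AgreeUpTo n ω ω' → H ω = H ω'

lemma Adapted.mono {m n : ℕ} (h : m ≤ n) {H : Traj M → ℝ} (hH : Adapted m H) :
    Adapted n H :=
  fun ω ω' hω => hH ω ω' (hω.mono h)

lemma Adapted.mul {n : ℕ} {H H' : Traj M → ℝ} (hH : Adapted n H) (hH' : Adapted n H') :
    Adapted n (fun ω => H ω * H' ω) :=
  fun ω ω' hω => congrArg₂ (· * ·) (hH ω ω' hω) (hH' ω ω' hω)

lemma Adapted.setStage_eq {n : ℕ} {H : Traj M → ℝ} (hH : Adapted n H) (hn : n < M.T)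
    (ω : Traj M) (b : StageVars M) : H (setStage n ω b) = H ω :=
  hH _ _
    { x0 := fun _ _ => rfl, x1 := fun _ _ => rfl, x2 := fun _ _ => rfl
      m1 := fun _ hs => M1v_setStage_of_ne (hs.trans hn) hn hs.ne ω b
      m2 := fun _ hs => M2v_setStage_of_ne (hs.trans hn) hn hs.ne ω b
      z := fun _ hs => Zv_setStage_of_ne (hs.trans hn) hn hs.ne ω b
      y := fun _ hs => Yv_setStage_of_ne (hs.trans hn) hn hs.ne ω b
      u1 := fun _ hs => U1v_setStage_of_ne (hs.trans hn) hn hs.ne ω b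
      u2 := fun _ hs => U2v_setStage_of_ne (hs.trans hn) hn hs.ne ω b
      ua := fun _ hs => UAv_setStage_of_ne (hs.trans hn) hn hs.ne ω b }

lemma Adapted.setState_succ_eq {n : ℕ} {H : Traj M → ℝ} (hH : Adapted n H)
    (hn : n + 1 < M.T) (ω : Traj M) (b : StateVars M) : H (setState (n+1) ω b) = H ω :=
  hH _ _
    { x0 := fun _ hs => X0v_setState_of_ne (by omega) hn (by omega) ω b
      x1 := fun _ hs => X1v_setState_of_ne (by omega) hn (by omega) ω b
      x2 := fun _ hs => X2v_setState_of_ne (by omega) hn (by omega) ω b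
      m1 := fun _ _ => rfl, m2 := fun _ _ => rfl, z := fun _ _ => rfl, y := fun _ _ => rfl
      u1 := fun _ _ => rfl, u2 := fun _ _ => rfl, ua := fun _ _ => rfl }

lemma Adapted.setAdv_eq {n : ℕ} {H : Traj M → ℝ} (hH : Adapted n H) (hn : n < M.T)
    (ω : Traj M) (u : M.Ua) : H (setAdv n ω u) = H ω :=
  hH _ _
    { x0 := fun _ _ => rfl, x1 := fun _ _ => rfl, x2 := fun _ _ => rfl
      m1 := fun _ _ => rfl, m2 := fun _ _ => rfl, z := fun _ _ => rfl, y := fun _ _ => rfl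
      u1 := fun _ _ => rfl, u2 := fun _ _ => rfl
      ua := fun _ hs => UAv_setAdv_of_ne (hs.trans hn) hn hs.ne ω u }

lemma info1_setStage {n : ℕ} (hn : n < M.T) (ω : Traj M) (b : StageVars M) :
    info1 n (setStage n ω b) = info1 n ω :=
  info1_congr (fun _ _ => rfl) (fun _ _ => rfl)
    (fun _ hs => U1v_setStage_of_ne (hs.trans hn) hn hs.ne ω b)
    (fun _ hs => M1v_setStage_of_ne (hs.trans hn) hn hs.ne ω b)
    (fun _ hs => M2v_setStage_of_ne (hs.trans hn) hn hs.ne ω b)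
    (fun _ hs => Zv_setStage_of_ne (hs.trans hn) hn hs.ne ω b)
    (fun _ hs => UAv_setStage_of_ne (hs.trans hn) hn hs.ne ω b)
    (fun _ hs => Yv_setStage_of_ne (hs.trans hn) hn hs.ne ω b)

lemma info2_setStage {n : ℕ} (hn : n < M.T) (ω : Traj M) (b : StageVars M) :
    info2 n (setStage n ω b) = info2 n ω :=
  info2_congr (fun _ _ => rfl) (fun _ _ => rfl)
    (fun _ hs => U2v_setStage_of_ne (hs.trans hn) hn hs.ne ω b)
    (fun _ hs => M1v_setStage_of_ne (hs.trans hn) hn hs.ne ω b)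
    (fun _ hs => M2v_setStage_of_ne (hs.trans hn) hn hs.ne ω b)
    (fun _ hs => Zv_setStage_of_ne (hs.trans hn) hn hs.ne ω b)
    (fun _ hs => UAv_setStage_of_ne (hs.trans hn) hn hs.ne ω b)
    (fun _ hs => Yv_setStage_of_ne (hs.trans hn) hn hs.ne ω b)

lemma pre_M_setStage {n : ℕ} (hn : n < M.T) (ω : Traj M) (b : StageVars M) :
    pre n (Mv (setStage n ω b)) = pre n (Mv ω) :=
  pre_congr fun _ hs => Mv_congr (M1v_setStage_of_ne (hs.trans hn) hn hs.ne ω b)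
    (M2v_setStage_of_ne (hs.trans hn) hn hs.ne ω b)

lemma pre_Z_setStage {n : ℕ} (hn : n < M.T) (ω : Traj M) (b : StageVars M) :
    pre n (Zv (setStage n ω b)) = pre n (Zv ω) :=
  pre_congr fun _ hs => Zv_setStage_of_ne (hs.trans hn) hn hs.ne ω b

lemma pre_Y_setStage {n : ℕ} (hn : n < M.T) (ω : Traj M) (b : StageVars M) :
    pre n (Yv (setStage n ω b)) = pre n (Yv ω) :=
  pre_congr fun _ hs => Yv_setStage_of_ne (hs.trans hn) hn hs.ne ω b

lemma pre_UA_setStage {n : ℕ} (hn : n < M.T) (ω : Traj M) (b : StageVars M) :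
    pre n (UAv (setStage n ω b)) = pre n (UAv ω) :=
  pre_congr fun _ hs => UAv_setStage_of_ne (hs.trans hn) hn hs.ne ω b

lemma Mv_setStage_self (n : ℕ) (ω : Traj M) (b : StageVars M) :
    Mv (setStage n ω b) n = (b.1, b.2.1) := by simp [Mv]

lemma info1p_setStage {n : ℕ} (hn : n < M.T) (ω : Traj M) (b : StageVars M) :
    info1p n (setStage n ω b) =
      (pre (n+1) (X0v ω), pre (n+1) (X1v ω), pre n (U1v ω),
       pre n (Mv ω) ++ [(b.1, b.2.1)], pre n (Zv ω) ++ [b.2.2.1],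
       pre n (UAv ω), pre n (Yv ω) ++ [b.2.2.2.1]) := by
  unfold info1p
  rw [pre_succ (Mv (setStage n ω b)) n, pre_succ (Zv (setStage n ω b)) n,
    pre_succ (Yv (setStage n ω b)) n, pre_M_setStage hn, pre_Z_setStage hn, pre_Y_setStage hn,
    pre_UA_setStage hn, Mv_setStage_self, Zv_setStage_self, Yv_setStage_self,
    pre_congr (fun s _ => X0v_setStage n ω b s), pre_congr (fun s _ => X1v_setStage n ω b s),
    pre_congr (fun s hs => U1v_setStage_of_ne (hs.trans hn) hn hs.ne ω b)]

lemma info2p_setStage {n : ℕ} (hn : n < M.T) (ω : Traj M) (b : StageVars M) :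
    info2p n (setStage n ω b) =
      (pre (n+1) (X0v ω), pre (n+1) (X2v ω), pre n (U2v ω),
       pre n (Mv ω) ++ [(b.1, b.2.1)], pre n (Zv ω) ++ [b.2.2.1],
       pre n (UAv ω), pre n (Yv ω) ++ [b.2.2.2.1]) := by
  unfold info2p
  rw [pre_succ (Mv (setStage n ω b)) n, pre_succ (Zv (setStage n ω b)) n,
    pre_succ (Yv (setStage n ω b)) n, pre_M_setStage hn, pre_Z_setStage hn, pre_Y_setStage hn,
    pre_UA_setStage hn, Mv_setStage_self, Zv_setStage_self, Yv_setStage_self,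
    pre_congr (fun s _ => X0v_setStage n ω b s), pre_congr (fun s _ => X2v_setStage n ω b s),
    pre_congr (fun s hs => U2v_setStage_of_ne (hs.trans hn) hn hs.ne ω b)]

lemma teamComP_setStage {n : ℕ} (hn : n < M.T) (ω : Traj M) (b : StageVars M) :
    teamComP n (setStage n ω b) =
      (pre (n+1) (X0v ω), pre n (Mv ω) ++ [(b.1, b.2.1)], pre n (Zv ω) ++ [b.2.2.1],
       pre n (UAv ω), pre n (Yv ω) ++ [b.2.2.2.1]) := by
  unfold teamComP
  rw [pre_succ (Mv (setStage n ω b)) n, pre_succ (Zv (setStage n ω b)) n,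
    pre_succ (Yv (setStage n ω b)) n, pre_M_setStage hn, pre_Z_setStage hn, pre_Y_setStage hn,
    pre_UA_setStage hn, Mv_setStage_self, Zv_setStage_self, Yv_setStage_self,
    pre_congr (fun s _ => X0v_setStage n ω b s)]

lemma adapted_initWeight : Adapted 0 (initWeight (M := M)) := fun ω ω' h => by
  simp only [initWeight, h.x0 0 le_rfl, h.x1 0 le_rfl, h.x2 0 le_rfl]

lemma adapted_stageFactor (σ : TeamStrategy M) (γ : AdvStrategy M (HistC M)) (s : ℕ) :
    Adapted (s+1) (stageFactor σ γ s) := by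
  intro ω ω' h
  have h' := h.mono s.le_succ
  have hs : ∀ r, r ≤ s → r < s + 1 := fun r hr => Nat.lt_succ_of_le hr
  have hkernel : stageKernel σ γ s ω = stageKernel σ γ s ω' := by
    unfold stageKernel teamKernel
    rw [info1_congr h'.x0 h'.x1 h'.u1 h'.m1 h'.m2 h'.z h'.ua h'.y,
      info2_congr h'.x0 h'.x2 h'.u2 h'.m1 h'.m2 h'.z h'.ua h'.y,
      info1p_congr h'.x0 h'.x1 h'.u1 (fun r hr => h.m1 r (hs r hr))
        (fun r hr => h.m2 r (hs r hr)) (fun r hr => h.z r (hs r hr)) h'.ua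
        (fun r hr => h.y r (hs r hr)),
      info2p_congr h'.x0 h'.x2 h'.u2 (fun r hr => h.m1 r (hs r hr))
        (fun r hr => h.m2 r (hs r hr)) (fun r hr => h.z r (hs r hr)) h'.ua
        (fun r hr => h.y r (hs r hr)),
      teamComP_congr h'.x0 (fun r hr => h.m1 r (hs r hr)) (fun r hr => h.m2 r (hs r hr))
        (fun r hr => h.z r (hs r hr)) h'.ua (fun r hr => h.y r (hs r hr))]
    simp only [Mv, h.m1 s s.lt_succ_self, h.m2 s s.lt_succ_self, h.z s s.lt_succ_self,
      h.y s s.lt_succ_self, h.u1 s s.lt_succ_self, h.u2 s s.lt_succ_self,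
      h.ua s s.lt_succ_self, h.x0 s s.le_succ, h.x1 s s.le_succ, h.x2 s s.le_succ]
  have htrans : transFactor s ω = transFactor s ω' := by
    simp only [transFactor, transKernel, h.x0 s s.le_succ, h.x0 (s+1) le_rfl,
      h.x1 s s.le_succ, h.x1 (s+1) le_rfl, h.x2 s s.le_succ, h.x2 (s+1) le_rfl,
      h.u1 s s.lt_succ_self, h.u2 s s.lt_succ_self, h.ua s s.lt_succ_self]
  rw [stageFactor, stageFactor, hkernel, htrans]

lemma prefixProb_succ (σ : TeamStrategy M) (γ : AdvStrategy M (HistC M)) (n : ℕ)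
    (ω : Traj M) : prefixProb σ γ (n+1) ω = prefixProb σ γ n ω * stageFactor σ γ n ω := by
  rw [prefixProb, prefixProb, Finset.prod_range_succ, mul_assoc]

lemma adapted_prefixProb (σ : TeamStrategy M) (γ : AdvStrategy M (HistC M)) (n : ℕ) :
    Adapted n (prefixProb σ γ n) := by
  induction n with
  | zero => exact fun ω ω' h => by simpa [prefixProb] using adapted_initWeight ω ω' h
  | succ n ih =>
    intro ω ω' h
    simp only [prefixProb_succ]
    exact (ih.mono n.le_succ).mul (adapted_stageFactor σ γ n) ω ω' h

lemma adapted_stageCost (t : ℕ) : Adapted (M := M) (t+1) (stageCost t) := fun ω ω' h => by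
  simp only [stageCost, h.x0 t t.le_succ, h.x1 t t.le_succ, h.x2 t t.le_succ,
    h.m1 t t.lt_succ_self, h.m2 t t.lt_succ_self, h.u1 t t.lt_succ_self,
    h.u2 t t.lt_succ_self, h.ua t t.lt_succ_self]

lemma sum_mul_stageKernel (σ : TeamStrategy M) (γ : AdvStrategy M (HistC M)) {n : ℕ}
    (hn : n < M.T) (P : Traj M → ℝ) (hP : ∀ ω b, P (setStage n ω b) = P ω) :
    ∑ ω : Traj M, P ω * stageKernel σ γ n ω =
      (Fintype.card (StageVars M) : ℝ)⁻¹ * ∑ ω : Traj M, P ω := by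
  refine (stageLens n).sum_mul_of_sum_set_eq_one P (stageKernel σ γ n) hP fun ω => ?_
  dsimp only [stageLens]
  simp only [stageKernel, teamKernel, info1_setStage hn, info2_setStage hn, info1p_setStage hn,
    info2p_setStage hn, teamComP_setStage hn, Mv_setStage_self, M1v_setStage_self,
    M2v_setStage_self, Zv_setStage_self, Yv_setStage_self, U1v_setStage_self,
    U2v_setStage_self, UAv_setStage_self, X0v_setStage, X1v_setStage, X2v_setStage,
    Fintype.sum_prod_type]
  simp only [← Finset.mul_sum, γ.ga_sum, mul_one, σ.g2_sum, σ.g1_sum,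
    M.obs_sum, zKer_sum, σ.f2_sum, σ.f1_sum]

lemma sum_mul_transKernel {n : ℕ} (hn : n + 1 < M.T) (P : Traj M → ℝ)
    (hP : ∀ ω b, P (setState (n+1) ω b) = P ω) :
    ∑ ω : Traj M, P ω * transKernel n ω =
      (Fintype.card (StateVars M) : ℝ)⁻¹ * ∑ ω : Traj M, P ω := by
  refine (stateLens (n+1)).sum_mul_of_sum_set_eq_one P (transKernel n) hP fun ω => ?_
  dsimp only [stateLens]
  have hlt : n < n + 1 := n.lt_succ_self
  simp only [transKernel, X0v_setState_of_ne (hlt.trans hn) hn hlt.ne,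
    X1v_setState_of_ne (hlt.trans hn) hn hlt.ne, X2v_setState_of_ne (hlt.trans hn) hn hlt.ne,
    X0v_setState_self, X1v_setState_self, X2v_setState_self, U1v_setState, U2v_setState,
    UAv_setState, Fintype.sum_prod_type]
  simp only [← Finset.mul_sum, M.trans2_sum, mul_one, M.trans1_sum, M.trans0_sum]

lemma teamKernel_setState (σ : TeamStrategy M) {t : ℕ} (ht1 : t + 1 < M.T) (ω : Traj M)
    (b : StateVars M) : teamKernel σ t (setState (t+1) ω b) = teamKernel σ t ω := by
  have hx0 : ∀ s, s ≤ t → X0v (setState (t+1) ω b) s = X0v ω s :=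
    fun s hs => X0v_setState_of_ne (by omega) ht1 (by omega) ω b
  have hx1 : ∀ s, s ≤ t → X1v (setState (t+1) ω b) s = X1v ω s :=
    fun s hs => X1v_setState_of_ne (by omega) ht1 (by omega) ω b
  have hx2 : ∀ s, s ≤ t → X2v (setState (t+1) ω b) s = X2v ω s :=
    fun s hs => X2v_setState_of_ne (by omega) ht1 (by omega) ω b
  unfold teamKernel
  rw [info1_congr hx0 hx1 (fun _ _ => rfl) (fun _ _ => rfl) (fun _ _ => rfl)
      (fun _ _ => rfl) (fun _ _ => rfl) (fun _ _ => rfl),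
    info2_congr hx0 hx2 (fun _ _ => rfl) (fun _ _ => rfl) (fun _ _ => rfl)
      (fun _ _ => rfl) (fun _ _ => rfl) (fun _ _ => rfl),
    info1p_congr hx0 hx1 (fun _ _ => rfl) (fun _ _ => rfl) (fun _ _ => rfl)
      (fun _ _ => rfl) (fun _ _ => rfl) (fun _ _ => rfl),
    info2p_congr hx0 hx2 (fun _ _ => rfl) (fun _ _ => rfl) (fun _ _ => rfl)
      (fun _ _ => rfl) (fun _ _ => rfl) (fun _ _ => rfl),
    hx0 t le_rfl, hx1 t le_rfl, hx2 t le_rfl]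
  rfl

lemma teamComP_setState {t : ℕ} (ht1 : t + 1 < M.T) (ω : Traj M) (b : StateVars M) :
    teamComP t (setState (t+1) ω b) = teamComP t ω :=
  teamComP_congr (fun s hs => X0v_setState_of_ne (by omega) ht1 (by omega) ω b)
    (fun _ _ => rfl) (fun _ _ => rfl) (fun _ _ => rfl) (fun _ _ => rfl) (fun _ _ => rfl)

lemma stageKernel_setState (σ : TeamStrategy M) (γ : AdvStrategy M (HistC M)) {n : ℕ}
    (hn : n + 1 < M.T) (ω : Traj M) (b : StateVars M) :
    stageKernel σ γ n (setState (n+1) ω b) = stageKernel σ γ n ω := by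
  rw [stageKernel, stageKernel, teamKernel_setState σ hn, teamComP_setState hn]
  rfl

/-- The normalization produced by summing out the transition kernel after stage `s`. -/
noncomputable def transNorm (M : Model) (s : ℕ) : ℝ :=
  if s + 1 < M.T then (Fintype.card (StateVars M) : ℝ)⁻¹ else 1

lemma sum_mul_transFactor {n : ℕ} (P : Traj M → ℝ)
    (hP : n + 1 < M.T → ∀ ω b, P (setState (n+1) ω b) = P ω) :
    ∑ ω : Traj M, P ω * transFactor n ω = transNorm M n * ∑ ω : Traj M, P ω := by
  unfold transFactor transNorm
  split_ifs with hn
  · exact sum_mul_transKernel hn P (hP hn)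
  · simp

noncomputable def stageNorm (M : Model) (s : ℕ) : ℝ :=
  (Fintype.card (StageVars M) : ℝ)⁻¹ * transNorm M s

lemma sum_mul_stageFactor (σ : TeamStrategy M) (γ : AdvStrategy M (HistC M)) {n : ℕ}
    (hn : n < M.T) {P : Traj M → ℝ} (hP : Adapted n P) :
    ∑ ω : Traj M, P ω * stageFactor σ γ n ω = stageNorm M n * ∑ ω : Traj M, P ω := by
  simp only [stageFactor, ← mul_assoc]
  rw [sum_mul_transFactor (fun ω => P ω * stageKernel σ γ n ω) fun hn1 ω b => by
      simp only [hP.setState_succ_eq hn1, stageKernel_setState σ γ hn1],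
    sum_mul_stageKernel σ γ hn P (hP.setStage_eq hn), stageNorm]
  ring

noncomputable def tailNorm (M : Model) (n : ℕ) : ℝ := ∏ s ∈ Finset.Ico n M.T, stageNorm M s

/-- All kernels are stochastic, so the stages after `n` only contribute the constant
`tailNorm M n`. -/
lemma sum_prefixProb_mul_of_adapted (σ : TeamStrategy M) (γ : AdvStrategy M (HistC M))
    {n : ℕ} (hn : n ≤ M.T) {H : Traj M → ℝ} (hH : Adapted n H) :
    ∑ ω : Traj M, prefixProb σ γ M.T ω * H ω =
      tailNorm M n * ∑ ω : Traj M, prefixProb σ γ n ω * H ω := by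
  obtain ⟨k, hk⟩ : ∃ k, M.T = n + k := ⟨M.T - n, by omega⟩
  induction k generalizing n with
  | zero =>
    obtain rfl : n = M.T := hk.symm
    simp [tailNorm]
  | succ k ih =>
    have hnT : n < M.T := by omega
    have hP : Adapted n (fun ω => prefixProb σ γ n ω * H ω) :=
      (adapted_prefixProb σ γ n).mul hH
    simp only [ih (n := n + 1) hnT (hH.mono n.le_succ) (by omega), prefixProb_succ,
      mul_right_comm _ _ (H _),
      sum_mul_stageFactor σ γ hnT hP, tailNorm, Finset.prod_eq_prod_Ico_succ_bot hnT]
    ring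

/-! ## Common and private factors -/

noncomputable def transFactor0 (s : ℕ) (ω : Traj M) : ℝ :=
  if s + 1 < M.T then M.trans0 (X0v ω s) (UAv ω s) (X0v ω (s+1)) else 1
noncomputable def transFactor1 (s : ℕ) (ω : Traj M) : ℝ :=
  if s + 1 < M.T then M.trans1 (X0v ω s) (X1v ω s) (U1v ω s) (X1v ω (s+1)) else 1
noncomputable def transFactor2 (s : ℕ) (ω : Traj M) : ℝ :=
  if s + 1 < M.T then M.trans2 (X0v ω s) (X2v ω s) (U2v ω s) (X2v ω (s+1)) else 1

/-- Everything in `stageFactor σ γ s` that involves agent 1's local state, decisions or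
actions (`stageFactor_eq_mul`). -/
noncomputable def privFactor1 (σ : TeamStrategy M) (s : ℕ) (ω : Traj M) : ℝ :=
  σ.f1 s (info1 s ω) (M1v ω s) * zMatch1 ω s *
    σ.g1 s (info1p s ω) (U1v ω s) * transFactor1 s ω

noncomputable def privFactor2 (σ : TeamStrategy M) (s : ℕ) (ω : Traj M) : ℝ :=
  σ.f2 s (info2 s ω) (M2v ω s) * zMatch2 ω s *
    σ.g2 s (info2p s ω) (U2v ω s) * transFactor2 s ω

noncomputable def commonFactor (γ : AdvStrategy M (HistC M)) (s : ℕ) (ω : Traj M) : ℝ :=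
  erasureWeight ω s * M.obs (Zv ω s) (Mv ω s) (X0v ω s) (Yv ω s) *
    γ.ga s (teamComP s ω) (UAv ω s) * transFactor0 s ω

noncomputable def privWeight1 (σ : TeamStrategy M) (n : ℕ) (ω : Traj M) : ℝ :=
  M.init1 (X1v ω 0) * ∏ s ∈ Finset.range n, privFactor1 σ s ω
noncomputable def privWeight2 (σ : TeamStrategy M) (n : ℕ) (ω : Traj M) : ℝ :=
  M.init2 (X2v ω 0) * ∏ s ∈ Finset.range n, privFactor2 σ s ω
noncomputable def commonWeight (γ : AdvStrategy M (HistC M)) (n : ℕ) (ω : Traj M) : ℝ :=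
  M.init0 (X0v ω 0) * ∏ s ∈ Finset.range n, commonFactor γ s ω

lemma stageFactor_eq_mul (σ : TeamStrategy M) (γ : AdvStrategy M (HistC M)) (s : ℕ)
    (ω : Traj M) :
    stageFactor σ γ s ω = commonFactor γ s ω * privFactor1 σ s ω * privFactor2 σ s ω := by
  unfold stageFactor stageKernel teamKernel commonFactor privFactor1 privFactor2
  rw [zKer_eq_mul]
  have hG : transFactor s ω = transFactor0 s ω * transFactor1 s ω * transFactor2 s ω := by
    unfold transFactor transFactor0 transFactor1 transFactor2 transKernel
    split_ifs with h
    · ring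
    · norm_num
  rw [hG]
  ring

lemma prefixProb_eq_mul (σ : TeamStrategy M) (γ : AdvStrategy M (HistC M)) (n : ℕ)
    (ω : Traj M) :
    prefixProb σ γ n ω = commonWeight γ n ω * privWeight1 σ n ω * privWeight2 σ n ω := by
  unfold prefixProb commonWeight privWeight1 privWeight2 initWeight
  rw [Finset.prod_congr rfl (fun s _ => stageFactor_eq_mul σ γ s ω),
    Finset.prod_mul_distrib, Finset.prod_mul_distrib]
  ring

lemma zMatch1_nonneg (ω : Traj M) (s : ℕ) : 0 ≤ zMatch1 ω s := by
  unfold zMatch1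
  cases hz : Zv ω s
  · norm_num
  · dsimp only
    split_ifs <;> norm_num

lemma zMatch2_nonneg (ω : Traj M) (s : ℕ) : 0 ≤ zMatch2 ω s := by
  unfold zMatch2
  cases hz : Zv ω s
  · norm_num
  · dsimp only
    split_ifs <;> norm_num

lemma transFactor1_nonneg (s : ℕ) (ω : Traj M) : 0 ≤ transFactor1 s ω := by
  unfold transFactor1
  split_ifs
  · exact M.trans1_nonneg _ _ _ _
  · norm_num

lemma transFactor2_nonneg (s : ℕ) (ω : Traj M) : 0 ≤ transFactor2 s ω := by
  unfold transFactor2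
  split_ifs
  · exact M.trans2_nonneg _ _ _ _
  · norm_num

lemma privFactor1_nonneg (σ : TeamStrategy M) (s : ℕ) (ω : Traj M) :
    0 ≤ privFactor1 σ s ω := by
  unfold privFactor1
  have := σ.f1_nonneg s (info1 s ω) (M1v ω s)
  have := σ.g1_nonneg s (info1p s ω) (U1v ω s)
  have := zMatch1_nonneg ω s
  have := transFactor1_nonneg s ω
  positivity

lemma privFactor2_nonneg (σ : TeamStrategy M) (s : ℕ) (ω : Traj M) :
    0 ≤ privFactor2 σ s ω := by
  unfold privFactor2
  have := σ.f2_nonneg s (info2 s ω) (M2v ω s)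
  have := σ.g2_nonneg s (info2p s ω) (U2v ω s)
  have := zMatch2_nonneg ω s
  have := transFactor2_nonneg s ω
  positivity

lemma privWeight1_nonneg (σ : TeamStrategy M) (n : ℕ) (ω : Traj M) :
    0 ≤ privWeight1 σ n ω := by
  unfold privWeight1
  apply mul_nonneg (M.init1_nonneg _)
  exact Finset.prod_nonneg fun s _ => privFactor1_nonneg σ s ω

lemma privWeight2_nonneg (σ : TeamStrategy M) (n : ℕ) (ω : Traj M) :
    0 ≤ privWeight2 σ n ω := by
  unfold privWeight2
  apply mul_nonneg (M.init2_nonneg _)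
  exact Finset.prod_nonneg fun s _ => privFactor2_nonneg σ s ω

lemma zMatch1_congr {s : ℕ} {ω ω' : Traj M} (hz : Zv ω s = Zv ω' s)
    (hx : X1v ω s = X1v ω' s) : zMatch1 ω s = zMatch1 ω' s := by
  unfold zMatch1
  rw [hz, hx]

lemma zMatch2_congr {s : ℕ} {ω ω' : Traj M} (hz : Zv ω s = Zv ω' s)
    (hx : X2v ω s = X2v ω' s) : zMatch2 ω s = zMatch2 ω' s := by
  unfold zMatch2
  rw [hz, hx]

lemma privWeight1_congr (σ : TeamStrategy M) {n : ℕ} {ω ω' : Traj M}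
    (hx0 : ∀ s, s < n → X0v ω s = X0v ω' s)
    (hx1 : ∀ s, s ≤ n → X1v ω s = X1v ω' s)
    (hu1 : ∀ s, s < n → U1v ω s = U1v ω' s)
    (hm1 : ∀ s, s < n → M1v ω s = M1v ω' s)
    (hm2 : ∀ s, s < n → M2v ω s = M2v ω' s)
    (hz : ∀ s, s < n → Zv ω s = Zv ω' s)
    (hy : ∀ s, s < n → Yv ω s = Yv ω' s)
    (hua : ∀ s, s < n → UAv ω s = UAv ω' s) :
    privWeight1 σ n ω = privWeight1 σ n ω' := by
  unfold privWeight1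
  rw [hx1 0 (Nat.zero_le n)]
  congr 1
  apply Finset.prod_congr rfl
  intro s hs
  have hsn := Finset.mem_range.mp hs
  have b0 : ∀ r, r ≤ s → X0v ω r = X0v ω' r := fun r hr => hx0 r (hr.trans_lt hsn)
  have b1 : ∀ r, r ≤ s → X1v ω r = X1v ω' r := fun r hr => hx1 r (hr.trans hsn.le)
  have bu : ∀ r, r ≤ s → U1v ω r = U1v ω' r := fun r hr => hu1 r (hr.trans_lt hsn)
  have bm1 : ∀ r, r ≤ s → M1v ω r = M1v ω' r := fun r hr => hm1 r (hr.trans_lt hsn)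
  have bm2 : ∀ r, r ≤ s → M2v ω r = M2v ω' r := fun r hr => hm2 r (hr.trans_lt hsn)
  have bz : ∀ r, r ≤ s → Zv ω r = Zv ω' r := fun r hr => hz r (hr.trans_lt hsn)
  have by0 : ∀ r, r ≤ s → Yv ω r = Yv ω' r := fun r hr => hy r (hr.trans_lt hsn)
  have bua : ∀ r, r ≤ s → UAv ω r = UAv ω' r := fun r hr => hua r (hr.trans_lt hsn)
  unfold privFactor1
  rw [info1_congr b0 b1 (fun r hr => bu r hr.le) (fun r hr => bm1 r hr.le)
      (fun r hr => bm2 r hr.le) (fun r hr => bz r hr.le)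
      (fun r hr => bua r hr.le) (fun r hr => by0 r hr.le),
    info1p_congr b0 b1 (fun r hr => bu r hr.le) bm1 bm2 bz
      (fun r hr => bua r hr.le) by0,
    zMatch1_congr (bz s le_rfl) (b1 s le_rfl),
    bm1 s le_rfl, bu s le_rfl]
  have ht : transFactor1 s ω = transFactor1 s ω' := by
    unfold transFactor1
    split_ifs with h
    · rw [b0 s le_rfl, b1 s le_rfl, bu s le_rfl, hx1 (s+1) (by omega)]
    · rfl
  rw [ht]

lemma privWeight2_congr (σ : TeamStrategy M) {n : ℕ} {ω ω' : Traj M}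
    (hx0 : ∀ s, s < n → X0v ω s = X0v ω' s)
    (hx2 : ∀ s, s ≤ n → X2v ω s = X2v ω' s)
    (hu2 : ∀ s, s < n → U2v ω s = U2v ω' s)
    (hm1 : ∀ s, s < n → M1v ω s = M1v ω' s)
    (hm2 : ∀ s, s < n → M2v ω s = M2v ω' s)
    (hz : ∀ s, s < n → Zv ω s = Zv ω' s)
    (hy : ∀ s, s < n → Yv ω s = Yv ω' s)
    (hua : ∀ s, s < n → UAv ω s = UAv ω' s) :
    privWeight2 σ n ω = privWeight2 σ n ω' := by
  unfold privWeight2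
  rw [hx2 0 (Nat.zero_le n)]
  congr 1
  apply Finset.prod_congr rfl
  intro s hs
  have hsn := Finset.mem_range.mp hs
  have b0 : ∀ r, r ≤ s → X0v ω r = X0v ω' r := fun r hr => hx0 r (hr.trans_lt hsn)
  have b2 : ∀ r, r ≤ s → X2v ω r = X2v ω' r := fun r hr => hx2 r (hr.trans hsn.le)
  have bu : ∀ r, r ≤ s → U2v ω r = U2v ω' r := fun r hr => hu2 r (hr.trans_lt hsn)
  have bm1 : ∀ r, r ≤ s → M1v ω r = M1v ω' r := fun r hr => hm1 r (hr.trans_lt hsn)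
  have bm2 : ∀ r, r ≤ s → M2v ω r = M2v ω' r := fun r hr => hm2 r (hr.trans_lt hsn)
  have bz : ∀ r, r ≤ s → Zv ω r = Zv ω' r := fun r hr => hz r (hr.trans_lt hsn)
  have by0 : ∀ r, r ≤ s → Yv ω r = Yv ω' r := fun r hr => hy r (hr.trans_lt hsn)
  have bua : ∀ r, r ≤ s → UAv ω r = UAv ω' r := fun r hr => hua r (hr.trans_lt hsn)
  unfold privFactor2
  rw [info2_congr b0 b2 (fun r hr => bu r hr.le) (fun r hr => bm1 r hr.le)
      (fun r hr => bm2 r hr.le) (fun r hr => bz r hr.le)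
      (fun r hr => bua r hr.le) (fun r hr => by0 r hr.le),
    info2p_congr b0 b2 (fun r hr => bu r hr.le) bm1 bm2 bz
      (fun r hr => bua r hr.le) by0,
    zMatch2_congr (bz s le_rfl) (b2 s le_rfl),
    bm2 s le_rfl, bu s le_rfl]
  have ht : transFactor2 s ω = transFactor2 s ω' := by
    unfold transFactor2
    split_ifs with h
    · rw [b0 s le_rfl, b2 s le_rfl, bu s le_rfl, hx2 (s+1) (by omega)]
    · rfl
  rw [ht]

/-! ## Reach weights -/

noncomputable def privWeightAct1 (σ : TeamStrategy M) (n : ℕ) (ω : Traj M) : ℝ :=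
  privWeight1 σ n ω * σ.f1 n (info1 n ω) (M1v ω n) * zMatch1 ω n *
    σ.g1 n (info1p n ω) (U1v ω n)

/-- Agent 1's reach weight: the total weight `privWeight1` of the private paths that complete
the common variables of `ω` and reach `X¹_n = a`. In `reachComm1`, `reachMsg1` and `reachAct1`
the paths moreover send `m`, are consistent with the realized `M¹_n` and `Z^er_n`, and play
`U¹_n = b`. Coordinates of the path beyond these are summed freely and only contribute constant
factors. -/
noncomputable def reach1 (σ : TeamStrategy M) (n : ℕ) (ω : Traj M) (a : M.X1) : ℝ :=
  ∑ p : PrivPath1 M, privWeight1 σ n (setPriv1 ω p) *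
    (if X1v (setPriv1 ω p) n = a then (1:ℝ) else 0)

noncomputable def reachComm1 (σ : TeamStrategy M) (n : ℕ) (ω : Traj M) (a : M.X1)
    (m : Bool) : ℝ :=
  ∑ p : PrivPath1 M, privWeight1 σ n (setPriv1 ω p) * σ.f1 n (info1 n (setPriv1 ω p)) m *
    (if X1v (setPriv1 ω p) n = a then (1:ℝ) else 0)

noncomputable def reachMsg1 (σ : TeamStrategy M) (n : ℕ) (ω : Traj M) (a : M.X1) : ℝ :=
  ∑ p : PrivPath1 M, privWeight1 σ n (setPriv1 ω p) *
    σ.f1 n (info1 n (setPriv1 ω p)) (M1v ω n) * zMatch1 (setPriv1 ω p) n *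
    (if X1v (setPriv1 ω p) n = a then (1:ℝ) else 0)

noncomputable def reachAct1 (σ : TeamStrategy M) (n : ℕ) (ω : Traj M) (a : M.X1)
    (b : M.U1) : ℝ :=
  ∑ p : PrivPath1 M, privWeightAct1 σ n (setPriv1 ω p) *
    (if X1v (setPriv1 ω p) n = a then (1:ℝ) else 0) *
    (if U1v (setPriv1 ω p) n = b then (1:ℝ) else 0)

noncomputable def privWeightAct2 (σ : TeamStrategy M) (n : ℕ) (ω : Traj M) : ℝ :=
  privWeight2 σ n ω * σ.f2 n (info2 n ω) (M2v ω n) * zMatch2 ω n *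
    σ.g2 n (info2p n ω) (U2v ω n)

noncomputable def reach2 (σ : TeamStrategy M) (n : ℕ) (ω : Traj M) (a : M.X2) : ℝ :=
  ∑ p : PrivPath2 M, privWeight2 σ n (setPriv2 ω p) *
    (if X2v (setPriv2 ω p) n = a then (1:ℝ) else 0)

noncomputable def reachComm2 (σ : TeamStrategy M) (n : ℕ) (ω : Traj M) (a : M.X2)
    (m : Bool) : ℝ :=
  ∑ p : PrivPath2 M, privWeight2 σ n (setPriv2 ω p) * σ.f2 n (info2 n (setPriv2 ω p)) m *
    (if X2v (setPriv2 ω p) n = a then (1:ℝ) else 0)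

noncomputable def reachMsg2 (σ : TeamStrategy M) (n : ℕ) (ω : Traj M) (a : M.X2) : ℝ :=
  ∑ p : PrivPath2 M, privWeight2 σ n (setPriv2 ω p) *
    σ.f2 n (info2 n (setPriv2 ω p)) (M2v ω n) * zMatch2 (setPriv2 ω p) n *
    (if X2v (setPriv2 ω p) n = a then (1:ℝ) else 0)

noncomputable def reachAct2 (σ : TeamStrategy M) (n : ℕ) (ω : Traj M) (a : M.X2)
    (b : M.U2) : ℝ :=
  ∑ p : PrivPath2 M, privWeightAct2 σ n (setPriv2 ω p) *
    (if X2v (setPriv2 ω p) n = a then (1:ℝ) else 0) *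
    (if U2v (setPriv2 ω p) n = b then (1:ℝ) else 0)

lemma indicator_nonneg {α : Type _} (x a : α) : (0:ℝ) ≤ (if x = a then (1:ℝ) else 0) := by
  split_ifs <;> norm_num

lemma reach1_nonneg (σ : TeamStrategy M) (n : ℕ) (ω : Traj M) (a : M.X1) :
    0 ≤ reach1 σ n ω a :=
  Finset.sum_nonneg fun _ _ => mul_nonneg (privWeight1_nonneg σ n _) (indicator_nonneg _ _)

lemma reachComm1_nonneg (σ : TeamStrategy M) (n : ℕ) (ω : Traj M) (a : M.X1) (m : Bool) :
    0 ≤ reachComm1 σ n ω a m :=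
  Finset.sum_nonneg fun _ _ => mul_nonneg (mul_nonneg (privWeight1_nonneg σ n _)
    (σ.f1_nonneg _ _ _)) (indicator_nonneg _ _)

lemma reachMsg1_nonneg (σ : TeamStrategy M) (n : ℕ) (ω : Traj M) (a : M.X1) :
    0 ≤ reachMsg1 σ n ω a :=
  Finset.sum_nonneg fun _ _ => mul_nonneg (mul_nonneg (mul_nonneg
    (privWeight1_nonneg σ n _) (σ.f1_nonneg _ _ _)) (zMatch1_nonneg _ _)) (indicator_nonneg _ _)

lemma privWeightAct1_nonneg (σ : TeamStrategy M) (n : ℕ) (ω : Traj M) :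
    0 ≤ privWeightAct1 σ n ω :=
  mul_nonneg (mul_nonneg (mul_nonneg (privWeight1_nonneg σ n _) (σ.f1_nonneg _ _ _))
    (zMatch1_nonneg _ _)) (σ.g1_nonneg _ _ _)

lemma reachAct1_nonneg (σ : TeamStrategy M) (n : ℕ) (ω : Traj M) (a : M.X1) (b : M.U1) :
    0 ≤ reachAct1 σ n ω a b :=
  Finset.sum_nonneg fun _ _ => mul_nonneg (mul_nonneg (privWeightAct1_nonneg σ n _)
    (indicator_nonneg _ _)) (indicator_nonneg _ _)

lemma reach2_nonneg (σ : TeamStrategy M) (n : ℕ) (ω : Traj M) (a : M.X2) :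
    0 ≤ reach2 σ n ω a :=
  Finset.sum_nonneg fun _ _ => mul_nonneg (privWeight2_nonneg σ n _) (indicator_nonneg _ _)

lemma reachComm2_nonneg (σ : TeamStrategy M) (n : ℕ) (ω : Traj M) (a : M.X2) (m : Bool) :
    0 ≤ reachComm2 σ n ω a m :=
  Finset.sum_nonneg fun _ _ => mul_nonneg (mul_nonneg (privWeight2_nonneg σ n _)
    (σ.f2_nonneg _ _ _)) (indicator_nonneg _ _)

lemma reachMsg2_nonneg (σ : TeamStrategy M) (n : ℕ) (ω : Traj M) (a : M.X2) :
    0 ≤ reachMsg2 σ n ω a :=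
  Finset.sum_nonneg fun _ _ => mul_nonneg (mul_nonneg (mul_nonneg
    (privWeight2_nonneg σ n _) (σ.f2_nonneg _ _ _)) (zMatch2_nonneg _ _)) (indicator_nonneg _ _)

lemma privWeightAct2_nonneg (σ : TeamStrategy M) (n : ℕ) (ω : Traj M) :
    0 ≤ privWeightAct2 σ n ω :=
  mul_nonneg (mul_nonneg (mul_nonneg (privWeight2_nonneg σ n _) (σ.f2_nonneg _ _ _))
    (zMatch2_nonneg _ _)) (σ.g2_nonneg _ _ _)

lemma reachAct2_nonneg (σ : TeamStrategy M) (n : ℕ) (ω : Traj M) (a : M.X2) (b : M.U2) :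
    0 ≤ reachAct2 σ n ω a b :=
  Finset.sum_nonneg fun _ _ => mul_nonneg (mul_nonneg (privWeightAct2_nonneg σ n _)
    (indicator_nonneg _ _)) (indicator_nonneg _ _)

lemma sum_reachComm1 (σ : TeamStrategy M) (n : ℕ) (ω : Traj M) (a : M.X1) :
    ∑ m : Bool, reachComm1 σ n ω a m = reach1 σ n ω a := by
  unfold reachComm1 reach1
  rw [Finset.sum_comm]
  apply Finset.sum_congr rfl
  intro p _
  have : ∀ m, privWeight1 σ n (setPriv1 ω p) * σ.f1 n (info1 n (setPriv1 ω p)) m *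
      (if X1v (setPriv1 ω p) n = a then (1:ℝ) else 0) =
      (privWeight1 σ n (setPriv1 ω p) * (if X1v (setPriv1 ω p) n = a then (1:ℝ) else 0)) *
        σ.f1 n (info1 n (setPriv1 ω p)) m := fun m => by ring
  rw [Finset.sum_congr rfl fun m _ => this m, ← Finset.mul_sum, σ.f1_sum, mul_one]

lemma sum_reachComm2 (σ : TeamStrategy M) (n : ℕ) (ω : Traj M) (a : M.X2) :
    ∑ m : Bool, reachComm2 σ n ω a m = reach2 σ n ω a := by
  unfold reachComm2 reach2
  rw [Finset.sum_comm]
  apply Finset.sum_congr rfl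
  intro p _
  have : ∀ m, privWeight2 σ n (setPriv2 ω p) * σ.f2 n (info2 n (setPriv2 ω p)) m *
      (if X2v (setPriv2 ω p) n = a then (1:ℝ) else 0) =
      (privWeight2 σ n (setPriv2 ω p) * (if X2v (setPriv2 ω p) n = a then (1:ℝ) else 0)) *
        σ.f2 n (info2 n (setPriv2 ω p)) m := fun m => by ring
  rw [Finset.sum_congr rfl fun m _ => this m, ← Finset.mul_sum, σ.f2_sum, mul_one]

lemma U1v_setPriv1_setPrivU_of_ne {n s : ℕ} (hs : s < n) (hn : n < M.T)
    (ω : Traj M) (p : PrivPath1 M) (b : M.U1) :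
    U1v (setPriv1 ω (setPrivU n p b)) s = U1v (setPriv1 ω p) s := by
  simp [U1v_setPriv1, setPrivU, Function.update_of_ne (idx_ne_idx (hs.trans hn) hn hs.ne)]

lemma U1v_setPriv1_setPrivU_self (n : ℕ) (ω : Traj M) (p : PrivPath1 M) (b : M.U1) :
    U1v (setPriv1 ω (setPrivU n p b)) n = b := by
  simp [U1v_setPriv1, setPrivU]

lemma privWeight1_setPriv1_setPrivU (σ : TeamStrategy M) {n : ℕ} (hn : n < M.T)
    (ω : Traj M) (p : PrivPath1 M) (b : M.U1) :
    privWeight1 σ n (setPriv1 ω (setPrivU n p b)) = privWeight1 σ n (setPriv1 ω p) :=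
  privWeight1_congr σ (fun _ _ => rfl) (fun _ _ => rfl)
    (fun _ hs => U1v_setPriv1_setPrivU_of_ne hs hn ω p b)
    (fun _ _ => rfl) (fun _ _ => rfl) (fun _ _ => rfl) (fun _ _ => rfl) (fun _ _ => rfl)

lemma info1_setPriv1_setPrivU {n : ℕ} (hn : n < M.T) (ω : Traj M) (p : PrivPath1 M) (b : M.U1) :
    info1 n (setPriv1 ω (setPrivU n p b)) = info1 n (setPriv1 ω p) :=
  info1_congr (fun _ _ => rfl) (fun _ _ => rfl)
    (fun _ hs => U1v_setPriv1_setPrivU_of_ne hs hn ω p b)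
    (fun _ _ => rfl) (fun _ _ => rfl) (fun _ _ => rfl) (fun _ _ => rfl) (fun _ _ => rfl)

lemma info1p_setPriv1_setPrivU {n : ℕ} (hn : n < M.T) (ω : Traj M) (p : PrivPath1 M) (b : M.U1) :
    info1p n (setPriv1 ω (setPrivU n p b)) = info1p n (setPriv1 ω p) :=
  info1p_congr (fun _ _ => rfl) (fun _ _ => rfl)
    (fun _ hs => U1v_setPriv1_setPrivU_of_ne hs hn ω p b)
    (fun _ _ => rfl) (fun _ _ => rfl) (fun _ _ => rfl) (fun _ _ => rfl) (fun _ _ => rfl)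

lemma U2v_setPriv2_setPrivU_of_ne {n s : ℕ} (hs : s < n) (hn : n < M.T)
    (ω : Traj M) (p : PrivPath2 M) (b : M.U2) :
    U2v (setPriv2 ω (setPrivU n p b)) s = U2v (setPriv2 ω p) s := by
  simp [U2v_setPriv2, setPrivU, Function.update_of_ne (idx_ne_idx (hs.trans hn) hn hs.ne)]

lemma U2v_setPriv2_setPrivU_self (n : ℕ) (ω : Traj M) (p : PrivPath2 M) (b : M.U2) :
    U2v (setPriv2 ω (setPrivU n p b)) n = b := by
  simp [U2v_setPriv2, setPrivU]

lemma privWeight2_setPriv2_setPrivU (σ : TeamStrategy M) {n : ℕ} (hn : n < M.T)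
    (ω : Traj M) (p : PrivPath2 M) (b : M.U2) :
    privWeight2 σ n (setPriv2 ω (setPrivU n p b)) = privWeight2 σ n (setPriv2 ω p) :=
  privWeight2_congr σ (fun _ _ => rfl) (fun _ _ => rfl)
    (fun _ hs => U2v_setPriv2_setPrivU_of_ne hs hn ω p b)
    (fun _ _ => rfl) (fun _ _ => rfl) (fun _ _ => rfl) (fun _ _ => rfl) (fun _ _ => rfl)

lemma info2_setPriv2_setPrivU {n : ℕ} (hn : n < M.T) (ω : Traj M) (p : PrivPath2 M) (b : M.U2) :
    info2 n (setPriv2 ω (setPrivU n p b)) = info2 n (setPriv2 ω p) :=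
  info2_congr (fun _ _ => rfl) (fun _ _ => rfl)
    (fun _ hs => U2v_setPriv2_setPrivU_of_ne hs hn ω p b)
    (fun _ _ => rfl) (fun _ _ => rfl) (fun _ _ => rfl) (fun _ _ => rfl) (fun _ _ => rfl)

lemma info2p_setPriv2_setPrivU {n : ℕ} (hn : n < M.T) (ω : Traj M) (p : PrivPath2 M) (b : M.U2) :
    info2p n (setPriv2 ω (setPrivU n p b)) = info2p n (setPriv2 ω p) :=
  info2p_congr (fun _ _ => rfl) (fun _ _ => rfl)
    (fun _ hs => U2v_setPriv2_setPrivU_of_ne hs hn ω p b)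
    (fun _ _ => rfl) (fun _ _ => rfl) (fun _ _ => rfl) (fun _ _ => rfl) (fun _ _ => rfl)

noncomputable def privWeightMsg1 (σ : TeamStrategy M) (n : ℕ) (ω : Traj M) : ℝ :=
  privWeight1 σ n ω * σ.f1 n (info1 n ω) (M1v ω n) * zMatch1 ω n

lemma privWeightMsg1_setPriv1_setPrivU (σ : TeamStrategy M) {n : ℕ} (hn : n < M.T)
    (ω : Traj M) (p : PrivPath1 M) (b : M.U1) :
    privWeightMsg1 σ n (setPriv1 ω (setPrivU n p b)) = privWeightMsg1 σ n (setPriv1 ω p) := by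
  rw [privWeightMsg1, privWeightMsg1, privWeight1_setPriv1_setPrivU σ hn,
    info1_setPriv1_setPrivU hn]
  rfl

lemma sum_reachAct1 (σ : TeamStrategy M) {n : ℕ} (hn : n < M.T) (ω : Traj M) (a : M.X1) :
    ∑ b : M.U1, reachAct1 σ n ω a b = (Fintype.card M.U1 : ℝ)⁻¹ * reachMsg1 σ n ω a := by
  have hb : ∀ p : PrivPath1 M, ∑ b : M.U1, privWeightAct1 σ n (setPriv1 ω p) *
      (if X1v (setPriv1 ω p) n = a then (1:ℝ) else 0) *
      (if U1v (setPriv1 ω p) n = b then (1:ℝ) else 0) =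
      privWeightMsg1 σ n (setPriv1 ω p) * (if X1v (setPriv1 ω p) n = a then 1 else 0) *
        σ.g1 n (info1p n (setPriv1 ω p)) (U1v (setPriv1 ω p) n) := fun p => by
    rw [← Finset.mul_sum, Finset.sum_ite_eq, if_pos (Finset.mem_univ _), privWeightAct1,
      privWeightMsg1]
    ring
  simp only [reachAct1]
  rw [Finset.sum_comm, Finset.sum_congr rfl fun p _ => hb p,
    (privULens n).sum_mul_of_sum_set_eq_one _ _
      (fun p c => congrArg (· * _) (privWeightMsg1_setPriv1_setPrivU σ hn ω p c))
      (fun p => by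
        dsimp only [privULens]
        simp only [info1p_setPriv1_setPrivU hn, U1v_setPriv1_setPrivU_self, σ.g1_sum])]
  rfl

noncomputable def privWeightMsg2 (σ : TeamStrategy M) (n : ℕ) (ω : Traj M) : ℝ :=
  privWeight2 σ n ω * σ.f2 n (info2 n ω) (M2v ω n) * zMatch2 ω n

lemma privWeightMsg2_setPriv2_setPrivU (σ : TeamStrategy M) {n : ℕ} (hn : n < M.T)
    (ω : Traj M) (p : PrivPath2 M) (b : M.U2) :
    privWeightMsg2 σ n (setPriv2 ω (setPrivU n p b)) = privWeightMsg2 σ n (setPriv2 ω p) := by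
  rw [privWeightMsg2, privWeightMsg2, privWeight2_setPriv2_setPrivU σ hn,
    info2_setPriv2_setPrivU hn]
  rfl

lemma sum_reachAct2 (σ : TeamStrategy M) {n : ℕ} (hn : n < M.T) (ω : Traj M) (a : M.X2) :
    ∑ b : M.U2, reachAct2 σ n ω a b = (Fintype.card M.U2 : ℝ)⁻¹ * reachMsg2 σ n ω a := by
  have hb : ∀ p : PrivPath2 M, ∑ b : M.U2, privWeightAct2 σ n (setPriv2 ω p) *
      (if X2v (setPriv2 ω p) n = a then (1:ℝ) else 0) *
      (if U2v (setPriv2 ω p) n = b then (1:ℝ) else 0) =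
      privWeightMsg2 σ n (setPriv2 ω p) * (if X2v (setPriv2 ω p) n = a then 1 else 0) *
        σ.g2 n (info2p n (setPriv2 ω p)) (U2v (setPriv2 ω p) n) := fun p => by
    rw [← Finset.mul_sum, Finset.sum_ite_eq, if_pos (Finset.mem_univ _), privWeightAct2,
      privWeightMsg2]
    ring
  simp only [reachAct2]
  rw [Finset.sum_comm, Finset.sum_congr rfl fun p _ => hb p,
    (privULens n).sum_mul_of_sum_set_eq_one _ _
      (fun p c => congrArg (· * _) (privWeightMsg2_setPriv2_setPrivU σ hn ω p c))
      (fun p => by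
        dsimp only [privULens]
        simp only [info2p_setPriv2_setPrivU hn, U2v_setPriv2_setPrivU_self, σ.g2_sum])]
  rfl

lemma reachComm1_eq_zero {σ : TeamStrategy M} {n : ℕ} {ω : Traj M} {a : M.X1}
    (h : reach1 σ n ω a = 0) (m : Bool) : reachComm1 σ n ω a m = 0 :=
  (Finset.sum_eq_zero_iff_of_nonneg fun m _ => reachComm1_nonneg σ n ω a m).mp
    (by rw [sum_reachComm1, h]) m (Finset.mem_univ m)

lemma reachComm2_eq_zero {σ : TeamStrategy M} {n : ℕ} {ω : Traj M} {a : M.X2}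
    (h : reach2 σ n ω a = 0) (m : Bool) : reachComm2 σ n ω a m = 0 :=
  (Finset.sum_eq_zero_iff_of_nonneg fun m _ => reachComm2_nonneg σ n ω a m).mp
    (by rw [sum_reachComm2, h]) m (Finset.mem_univ m)

lemma reachAct1_eq_zero {σ : TeamStrategy M} {n : ℕ} (hn : n < M.T) {ω : Traj M} {a : M.X1}
    (h : reachMsg1 σ n ω a = 0) (b : M.U1) : reachAct1 σ n ω a b = 0 :=
  (Finset.sum_eq_zero_iff_of_nonneg fun b _ => reachAct1_nonneg σ n ω a b).mp
    (by rw [sum_reachAct1 σ hn, h, mul_zero]) b (Finset.mem_univ b)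

lemma reachAct2_eq_zero {σ : TeamStrategy M} {n : ℕ} (hn : n < M.T) {ω : Traj M} {a : M.X2}
    (h : reachMsg2 σ n ω a = 0) (b : M.U2) : reachAct2 σ n ω a b = 0 :=
  (Finset.sum_eq_zero_iff_of_nonneg fun b _ => reachAct2_nonneg σ n ω a b).mp
    (by rw [sum_reachAct2 σ hn, h, mul_zero]) b (Finset.mem_univ b)

lemma reach1_congr (σ : TeamStrategy M) {n : ℕ} {ω ω' : Traj M}
    (hx0 : ∀ s, s < n → X0v ω s = X0v ω' s)
    (hm1 : ∀ s, s < n → M1v ω s = M1v ω' s)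
    (hm2 : ∀ s, s < n → M2v ω s = M2v ω' s)
    (hz : ∀ s, s < n → Zv ω s = Zv ω' s)
    (hy : ∀ s, s < n → Yv ω s = Yv ω' s)
    (hua : ∀ s, s < n → UAv ω s = UAv ω' s)
    (a : M.X1) : reach1 σ n ω a = reach1 σ n ω' a := by
  apply Finset.sum_congr rfl
  intro p _
  rw [privWeight1_congr σ (ω := setPriv1 ω p) (ω' := setPriv1 ω' p)
    hx0 (fun _ _ => rfl) (fun _ _ => rfl) hm1 hm2 hz hy hua]
  simp only [X1v_setPriv1]
  rfl

lemma reachComm1_congr (σ : TeamStrategy M) {n : ℕ} {ω ω' : Traj M}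
    (hx0 : ∀ s, s ≤ n → X0v ω s = X0v ω' s)
    (hm1 : ∀ s, s < n → M1v ω s = M1v ω' s)
    (hm2 : ∀ s, s < n → M2v ω s = M2v ω' s)
    (hz : ∀ s, s < n → Zv ω s = Zv ω' s)
    (hy : ∀ s, s < n → Yv ω s = Yv ω' s)
    (hua : ∀ s, s < n → UAv ω s = UAv ω' s)
    (a : M.X1) (m : Bool) : reachComm1 σ n ω a m = reachComm1 σ n ω' a m := by
  apply Finset.sum_congr rfl
  intro p _
  rw [privWeight1_congr σ (ω := setPriv1 ω p) (ω' := setPriv1 ω' p)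
    (fun s hs => hx0 s hs.le) (fun _ _ => rfl) (fun _ _ => rfl) hm1 hm2 hz hy hua,
    info1_congr (ω := setPriv1 ω p) (ω' := setPriv1 ω' p) hx0 (fun _ _ => rfl) (fun _ _ => rfl)
    hm1 hm2 hz hua hy]
  simp only [X1v_setPriv1]
  rfl

lemma reachMsg1_congr (σ : TeamStrategy M) {n : ℕ} {ω ω' : Traj M}
    (hx0 : ∀ s, s ≤ n → X0v ω s = X0v ω' s)
    (hm1 : ∀ s, s ≤ n → M1v ω s = M1v ω' s)
    (hm2 : ∀ s, s < n → M2v ω s = M2v ω' s)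
    (hz : ∀ s, s ≤ n → Zv ω s = Zv ω' s)
    (hy : ∀ s, s < n → Yv ω s = Yv ω' s)
    (hua : ∀ s, s < n → UAv ω s = UAv ω' s)
    (a : M.X1) : reachMsg1 σ n ω a = reachMsg1 σ n ω' a := by
  apply Finset.sum_congr rfl
  intro p _
  rw [privWeight1_congr σ (ω := setPriv1 ω p) (ω' := setPriv1 ω' p)
    (fun s hs => hx0 s hs.le) (fun _ _ => rfl) (fun _ _ => rfl)
    (fun s hs => hm1 s hs.le) hm2 (fun s hs => hz s hs.le) hy hua,
    info1_congr (ω := setPriv1 ω p) (ω' := setPriv1 ω' p) hx0 (fun _ _ => rfl) (fun _ _ => rfl)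
    (fun s hs => hm1 s hs.le) hm2 (fun s hs => hz s hs.le) hua hy,
    hm1 n le_rfl,
    zMatch1_congr (ω := setPriv1 ω p) (ω' := setPriv1 ω' p) (hz n le_rfl) rfl]
  simp only [X1v_setPriv1]
  rfl

lemma reachAct1_congr (σ : TeamStrategy M) {n : ℕ} {ω ω' : Traj M}
    (hx0 : ∀ s, s ≤ n → X0v ω s = X0v ω' s)
    (hm1 : ∀ s, s ≤ n → M1v ω s = M1v ω' s)
    (hm2 : ∀ s, s ≤ n → M2v ω s = M2v ω' s)
    (hz : ∀ s, s ≤ n → Zv ω s = Zv ω' s)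
    (hy : ∀ s, s ≤ n → Yv ω s = Yv ω' s)
    (hua : ∀ s, s < n → UAv ω s = UAv ω' s)
    (a : M.X1) (b : M.U1) : reachAct1 σ n ω a b = reachAct1 σ n ω' a b := by
  apply Finset.sum_congr rfl
  intro p _
  unfold privWeightAct1
  rw [privWeight1_congr σ (ω := setPriv1 ω p) (ω' := setPriv1 ω' p)
    (fun s hs => hx0 s hs.le) (fun _ _ => rfl) (fun _ _ => rfl)
    (fun s hs => hm1 s hs.le) (fun s hs => hm2 s hs.le) (fun s hs => hz s hs.le)
    (fun s hs => hy s hs.le) hua,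
    info1_congr (ω := setPriv1 ω p) (ω' := setPriv1 ω' p) hx0 (fun _ _ => rfl) (fun _ _ => rfl)
    (fun s hs => hm1 s hs.le) (fun s hs => hm2 s hs.le) (fun s hs => hz s hs.le)
    hua (fun s hs => hy s hs.le),
    info1p_congr (ω := setPriv1 ω p) (ω' := setPriv1 ω' p) hx0 (fun _ _ => rfl) (fun _ _ => rfl)
    hm1 hm2 hz hua hy,
    zMatch1_congr (ω := setPriv1 ω p) (ω' := setPriv1 ω' p) (hz n le_rfl) rfl]
  simp only [X1v_setPriv1, U1v_setPriv1, M1v_setPriv1]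
  rw [hm1 n le_rfl]
  rfl

lemma reach2_congr (σ : TeamStrategy M) {n : ℕ} {ω ω' : Traj M}
    (hx0 : ∀ s, s < n → X0v ω s = X0v ω' s)
    (hm1 : ∀ s, s < n → M1v ω s = M1v ω' s)
    (hm2 : ∀ s, s < n → M2v ω s = M2v ω' s)
    (hz : ∀ s, s < n → Zv ω s = Zv ω' s)
    (hy : ∀ s, s < n → Yv ω s = Yv ω' s)
    (hua : ∀ s, s < n → UAv ω s = UAv ω' s)
    (a : M.X2) : reach2 σ n ω a = reach2 σ n ω' a := by
  apply Finset.sum_congr rfl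
  intro p _
  rw [privWeight2_congr σ (ω := setPriv2 ω p) (ω' := setPriv2 ω' p)
    hx0 (fun _ _ => rfl) (fun _ _ => rfl) hm1 hm2 hz hy hua]
  simp only [X2v_setPriv2]
  rfl

lemma reachComm2_congr (σ : TeamStrategy M) {n : ℕ} {ω ω' : Traj M}
    (hx0 : ∀ s, s ≤ n → X0v ω s = X0v ω' s)
    (hm1 : ∀ s, s < n → M1v ω s = M1v ω' s)
    (hm2 : ∀ s, s < n → M2v ω s = M2v ω' s)
    (hz : ∀ s, s < n → Zv ω s = Zv ω' s)
    (hy : ∀ s, s < n → Yv ω s = Yv ω' s)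
    (hua : ∀ s, s < n → UAv ω s = UAv ω' s)
    (a : M.X2) (m : Bool) : reachComm2 σ n ω a m = reachComm2 σ n ω' a m := by
  apply Finset.sum_congr rfl
  intro p _
  rw [privWeight2_congr σ (ω := setPriv2 ω p) (ω' := setPriv2 ω' p)
    (fun s hs => hx0 s hs.le) (fun _ _ => rfl) (fun _ _ => rfl) hm1 hm2 hz hy hua,
    info2_congr (ω := setPriv2 ω p) (ω' := setPriv2 ω' p) hx0 (fun _ _ => rfl) (fun _ _ => rfl)
    hm1 hm2 hz hua hy]
  simp only [X2v_setPriv2]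
  rfl

lemma reachMsg2_congr (σ : TeamStrategy M) {n : ℕ} {ω ω' : Traj M}
    (hx0 : ∀ s, s ≤ n → X0v ω s = X0v ω' s)
    (hm1 : ∀ s, s < n → M1v ω s = M1v ω' s)
    (hm2 : ∀ s, s ≤ n → M2v ω s = M2v ω' s)
    (hz : ∀ s, s ≤ n → Zv ω s = Zv ω' s)
    (hy : ∀ s, s < n → Yv ω s = Yv ω' s)
    (hua : ∀ s, s < n → UAv ω s = UAv ω' s)
    (a : M.X2) : reachMsg2 σ n ω a = reachMsg2 σ n ω' a := by
  apply Finset.sum_congr rfl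
  intro p _
  rw [privWeight2_congr σ (ω := setPriv2 ω p) (ω' := setPriv2 ω' p)
    (fun s hs => hx0 s hs.le) (fun _ _ => rfl) (fun _ _ => rfl)
    hm1 (fun s hs => hm2 s hs.le) (fun s hs => hz s hs.le) hy hua,
    info2_congr (ω := setPriv2 ω p) (ω' := setPriv2 ω' p) hx0 (fun _ _ => rfl) (fun _ _ => rfl)
    hm1 (fun s hs => hm2 s hs.le) (fun s hs => hz s hs.le) hua hy,
    hm2 n le_rfl,
    zMatch2_congr (ω := setPriv2 ω p) (ω' := setPriv2 ω' p) (hz n le_rfl) rfl]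
  simp only [X2v_setPriv2]
  rfl

lemma reachAct2_congr (σ : TeamStrategy M) {n : ℕ} {ω ω' : Traj M}
    (hx0 : ∀ s, s ≤ n → X0v ω s = X0v ω' s)
    (hm1 : ∀ s, s ≤ n → M1v ω s = M1v ω' s)
    (hm2 : ∀ s, s ≤ n → M2v ω s = M2v ω' s)
    (hz : ∀ s, s ≤ n → Zv ω s = Zv ω' s)
    (hy : ∀ s, s ≤ n → Yv ω s = Yv ω' s)
    (hua : ∀ s, s < n → UAv ω s = UAv ω' s)
    (a : M.X2) (b : M.U2) : reachAct2 σ n ω a b = reachAct2 σ n ω' a b := by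
  apply Finset.sum_congr rfl
  intro p _
  unfold privWeightAct2
  rw [privWeight2_congr σ (ω := setPriv2 ω p) (ω' := setPriv2 ω' p)
    (fun s hs => hx0 s hs.le) (fun _ _ => rfl) (fun _ _ => rfl)
    (fun s hs => hm1 s hs.le) (fun s hs => hm2 s hs.le) (fun s hs => hz s hs.le)
    (fun s hs => hy s hs.le) hua,
    info2_congr (ω := setPriv2 ω p) (ω' := setPriv2 ω' p) hx0 (fun _ _ => rfl) (fun _ _ => rfl)
    (fun s hs => hm1 s hs.le) (fun s hs => hm2 s hs.le) (fun s hs => hz s hs.le)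
    hua (fun s hs => hy s hs.le),
    info2p_congr (ω := setPriv2 ω p) (ω' := setPriv2 ω' p) hx0 (fun _ _ => rfl) (fun _ _ => rfl)
    hm1 hm2 hz hua hy,
    zMatch2_congr (ω := setPriv2 ω p) (ω' := setPriv2 ω' p) (hz n le_rfl) rfl]
  simp only [X2v_setPriv2, U2v_setPriv2, M2v_setPriv2]
  rw [hm2 n le_rfl]
  rfl

/-- A trajectory whose common variables are read off `ι`; its private coordinates are
arbitrary. -/
noncomputable def trajOfCommon (ι : HistC M) : Traj M :=
  (fun i => ι.1.getD i (Classical.arbitrary M.X0),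
   fun _ => Classical.arbitrary M.X1,
   fun _ => Classical.arbitrary M.X2,
   fun i => (ι.2.1.getD i (false, false)).1,
   fun i => (ι.2.1.getD i (false, false)).2,
   fun i => ι.2.2.1.getD i none,
   fun i => ι.2.2.2.2.getD i (Classical.arbitrary M.Y),
   fun _ => Classical.arbitrary M.U1,
   fun _ => Classical.arbitrary M.U2,
   fun i => ι.2.2.2.1.getD i (Classical.arbitrary M.Ua))

lemma pre_getD_idx {α : Type*} {t s : ℕ} (hsT : s < M.T) (hs : s < t) (f : ℕ → α) (d : α) :
    (pre t f).getD (idx M s) d = f s := by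
  rw [idx_of_lt hsT]
  exact pre_getD_of_lt hs f d

section TrajOfCommon

variable {t s : ℕ} {ω : Traj M}

lemma X0v_trajOfCommon_teamCom (ht : t < M.T) (hs : s ≤ t) :
    X0v (trajOfCommon (teamCom t ω)) s = X0v ω s :=
  pre_getD_idx (hs.trans_lt ht) (Nat.lt_succ_of_le hs) _ _
lemma M1v_trajOfCommon_teamCom (ht : t < M.T) (hs : s < t) :
    M1v (trajOfCommon (teamCom t ω)) s = M1v ω s :=
  congrArg Prod.fst (pre_getD_idx (hs.trans ht) hs _ _)
lemma M2v_trajOfCommon_teamCom (ht : t < M.T) (hs : s < t) :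
    M2v (trajOfCommon (teamCom t ω)) s = M2v ω s :=
  congrArg Prod.snd (pre_getD_idx (hs.trans ht) hs _ _)
lemma Zv_trajOfCommon_teamCom (ht : t < M.T) (hs : s < t) :
    Zv (trajOfCommon (teamCom t ω)) s = Zv ω s :=
  pre_getD_idx (hs.trans ht) hs _ _
lemma Yv_trajOfCommon_teamCom (ht : t < M.T) (hs : s < t) :
    Yv (trajOfCommon (teamCom t ω)) s = Yv ω s :=
  pre_getD_idx (hs.trans ht) hs _ _
lemma UAv_trajOfCommon_teamCom (ht : t < M.T) (hs : s < t) :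
    UAv (trajOfCommon (teamCom t ω)) s = UAv ω s :=
  pre_getD_idx (hs.trans ht) hs _ _

lemma X0v_trajOfCommon_teamComP (ht : t < M.T) (hs : s ≤ t) :
    X0v (trajOfCommon (teamComP t ω)) s = X0v ω s :=
  pre_getD_idx (hs.trans_lt ht) (Nat.lt_succ_of_le hs) _ _
lemma M1v_trajOfCommon_teamComP (ht : t < M.T) (hs : s ≤ t) :
    M1v (trajOfCommon (teamComP t ω)) s = M1v ω s :=
  congrArg Prod.fst (pre_getD_idx (hs.trans_lt ht) (Nat.lt_succ_of_le hs) _ _)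
lemma M2v_trajOfCommon_teamComP (ht : t < M.T) (hs : s ≤ t) :
    M2v (trajOfCommon (teamComP t ω)) s = M2v ω s :=
  congrArg Prod.snd (pre_getD_idx (hs.trans_lt ht) (Nat.lt_succ_of_le hs) _ _)
lemma Zv_trajOfCommon_teamComP (ht : t < M.T) (hs : s ≤ t) :
    Zv (trajOfCommon (teamComP t ω)) s = Zv ω s :=
  pre_getD_idx (hs.trans_lt ht) (Nat.lt_succ_of_le hs) _ _
lemma Yv_trajOfCommon_teamComP (ht : t < M.T) (hs : s ≤ t) :
    Yv (trajOfCommon (teamComP t ω)) s = Yv ω s :=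
  pre_getD_idx (hs.trans_lt ht) (Nat.lt_succ_of_le hs) _ _
lemma UAv_trajOfCommon_teamComP (ht : t < M.T) (hs : s < t) :
    UAv (trajOfCommon (teamComP t ω)) s = UAv ω s :=
  pre_getD_idx (hs.trans ht) hs _ _

end TrajOfCommon

lemma reach1_trajOfCommon (σ : TeamStrategy M) {t : ℕ} (ht : t < M.T) (ω : Traj M)
    (a : M.X1) : reach1 σ t (trajOfCommon (teamCom t ω)) a = reach1 σ t ω a :=
  reach1_congr σ (fun _ hs => X0v_trajOfCommon_teamCom ht hs.le)
    (fun _ => M1v_trajOfCommon_teamCom ht) (fun _ => M2v_trajOfCommon_teamCom ht)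
    (fun _ => Zv_trajOfCommon_teamCom ht) (fun _ => Yv_trajOfCommon_teamCom ht)
    (fun _ => UAv_trajOfCommon_teamCom ht) a

lemma reachComm1_trajOfCommon (σ : TeamStrategy M) {t : ℕ} (ht : t < M.T) (ω : Traj M)
    (a : M.X1) (m : Bool) :
    reachComm1 σ t (trajOfCommon (teamCom t ω)) a m = reachComm1 σ t ω a m :=
  reachComm1_congr σ (fun _ => X0v_trajOfCommon_teamCom ht)
    (fun _ => M1v_trajOfCommon_teamCom ht) (fun _ => M2v_trajOfCommon_teamCom ht)
    (fun _ => Zv_trajOfCommon_teamCom ht) (fun _ => Yv_trajOfCommon_teamCom ht)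
    (fun _ => UAv_trajOfCommon_teamCom ht) a m

lemma reachMsg1_trajOfCommon (σ : TeamStrategy M) {t : ℕ} (ht : t < M.T) (ω : Traj M)
    (a : M.X1) : reachMsg1 σ t (trajOfCommon (teamComP t ω)) a = reachMsg1 σ t ω a :=
  reachMsg1_congr σ (fun _ => X0v_trajOfCommon_teamComP ht)
    (fun _ => M1v_trajOfCommon_teamComP ht) (fun _ hs => M2v_trajOfCommon_teamComP ht hs.le)
    (fun _ => Zv_trajOfCommon_teamComP ht) (fun _ hs => Yv_trajOfCommon_teamComP ht hs.le)
    (fun _ => UAv_trajOfCommon_teamComP ht) a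

lemma reachAct1_trajOfCommon (σ : TeamStrategy M) {t : ℕ} (ht : t < M.T) (ω : Traj M)
    (a : M.X1) (b : M.U1) :
    reachAct1 σ t (trajOfCommon (teamComP t ω)) a b = reachAct1 σ t ω a b :=
  reachAct1_congr σ (fun _ => X0v_trajOfCommon_teamComP ht)
    (fun _ => M1v_trajOfCommon_teamComP ht) (fun _ => M2v_trajOfCommon_teamComP ht)
    (fun _ => Zv_trajOfCommon_teamComP ht) (fun _ => Yv_trajOfCommon_teamComP ht)
    (fun _ => UAv_trajOfCommon_teamComP ht) a b

lemma reach2_trajOfCommon (σ : TeamStrategy M) {t : ℕ} (ht : t < M.T) (ω : Traj M)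
    (a : M.X2) : reach2 σ t (trajOfCommon (teamCom t ω)) a = reach2 σ t ω a :=
  reach2_congr σ (fun _ hs => X0v_trajOfCommon_teamCom ht hs.le)
    (fun _ => M1v_trajOfCommon_teamCom ht) (fun _ => M2v_trajOfCommon_teamCom ht)
    (fun _ => Zv_trajOfCommon_teamCom ht) (fun _ => Yv_trajOfCommon_teamCom ht)
    (fun _ => UAv_trajOfCommon_teamCom ht) a

lemma reachComm2_trajOfCommon (σ : TeamStrategy M) {t : ℕ} (ht : t < M.T) (ω : Traj M)
    (a : M.X2) (m : Bool) :
    reachComm2 σ t (trajOfCommon (teamCom t ω)) a m = reachComm2 σ t ω a m :=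
  reachComm2_congr σ (fun _ => X0v_trajOfCommon_teamCom ht)
    (fun _ => M1v_trajOfCommon_teamCom ht) (fun _ => M2v_trajOfCommon_teamCom ht)
    (fun _ => Zv_trajOfCommon_teamCom ht) (fun _ => Yv_trajOfCommon_teamCom ht)
    (fun _ => UAv_trajOfCommon_teamCom ht) a m

lemma reachMsg2_trajOfCommon (σ : TeamStrategy M) {t : ℕ} (ht : t < M.T) (ω : Traj M)
    (a : M.X2) : reachMsg2 σ t (trajOfCommon (teamComP t ω)) a = reachMsg2 σ t ω a :=
  reachMsg2_congr σ (fun _ => X0v_trajOfCommon_teamComP ht)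
    (fun _ hs => M1v_trajOfCommon_teamComP ht hs.le) (fun _ => M2v_trajOfCommon_teamComP ht)
    (fun _ => Zv_trajOfCommon_teamComP ht) (fun _ hs => Yv_trajOfCommon_teamComP ht hs.le)
    (fun _ => UAv_trajOfCommon_teamComP ht) a

lemma reachAct2_trajOfCommon (σ : TeamStrategy M) {t : ℕ} (ht : t < M.T) (ω : Traj M)
    (a : M.X2) (b : M.U2) :
    reachAct2 σ t (trajOfCommon (teamComP t ω)) a b = reachAct2 σ t ω a b :=
  reachAct2_congr σ (fun _ => X0v_trajOfCommon_teamComP ht)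
    (fun _ => M1v_trajOfCommon_teamComP ht) (fun _ => M2v_trajOfCommon_teamComP ht)
    (fun _ => Zv_trajOfCommon_teamComP ht) (fun _ => Yv_trajOfCommon_teamComP ht)
    (fun _ => UAv_trajOfCommon_teamComP ht) a b

/-! ## The lumped strategy -/

/-- Agent 1's lumped communication law: the conditional law of `M¹_t` given `X¹_t = a` and the
common information `ι` (uniform where that event is unreachable). -/
noncomputable def lumpedF1 (σ : TeamStrategy M) (t : ℕ) (ι : HistC M) (a : M.X1)
    (m : Bool) : ℝ :=
  if 0 < reach1 σ t (trajOfCommon ι) a then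
    reachComm1 σ t (trajOfCommon ι) a m / reach1 σ t (trajOfCommon ι) a
  else 2⁻¹

/-- Agent 1's lumped control law. The factor `|𝒰¹|` appears because `reachMsg1` leaves the
coordinate `U¹_t` free (see `sum_reachAct1`). -/
noncomputable def lumpedG1 (σ : TeamStrategy M) (t : ℕ) (ι : HistC M) (a : M.X1)
    (b : M.U1) : ℝ :=
  if t < M.T ∧ 0 < reachMsg1 σ t (trajOfCommon ι) a then
    (Fintype.card M.U1 : ℝ) * reachAct1 σ t (trajOfCommon ι) a b /
      reachMsg1 σ t (trajOfCommon ι) a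
  else (Fintype.card M.U1 : ℝ)⁻¹

noncomputable def lumpedF2 (σ : TeamStrategy M) (t : ℕ) (ι : HistC M) (a : M.X2)
    (m : Bool) : ℝ :=
  if 0 < reach2 σ t (trajOfCommon ι) a then
    reachComm2 σ t (trajOfCommon ι) a m / reach2 σ t (trajOfCommon ι) a
  else 2⁻¹

noncomputable def lumpedG2 (σ : TeamStrategy M) (t : ℕ) (ι : HistC M) (a : M.X2)
    (b : M.U2) : ℝ :=
  if t < M.T ∧ 0 < reachMsg2 σ t (trajOfCommon ι) a then
    (Fintype.card M.U2 : ℝ) * reachAct2 σ t (trajOfCommon ι) a b /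
      reachMsg2 σ t (trajOfCommon ι) a
  else (Fintype.card M.U2 : ℝ)⁻¹

lemma lumpedF1_nonneg (σ : TeamStrategy M) (t : ℕ) (ι : HistC M) (a : M.X1) (m : Bool) :
    0 ≤ lumpedF1 σ t ι a m := by
  unfold lumpedF1
  split_ifs with hpos
  · exact div_nonneg (reachComm1_nonneg σ t _ _ m) hpos.le
  · norm_num

lemma lumpedF2_nonneg (σ : TeamStrategy M) (t : ℕ) (ι : HistC M) (a : M.X2) (m : Bool) :
    0 ≤ lumpedF2 σ t ι a m := by
  unfold lumpedF2
  split_ifs with hpos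
  · exact div_nonneg (reachComm2_nonneg σ t _ _ m) hpos.le
  · norm_num

lemma lumpedG1_nonneg (σ : TeamStrategy M) (t : ℕ) (ι : HistC M) (a : M.X1) (b : M.U1) :
    0 ≤ lumpedG1 σ t ι a b := by
  unfold lumpedG1
  split_ifs with hpos
  · exact div_nonneg (mul_nonneg (by positivity) (reachAct1_nonneg σ t _ _ b)) hpos.2.le
  · positivity

lemma lumpedG2_nonneg (σ : TeamStrategy M) (t : ℕ) (ι : HistC M) (a : M.X2) (b : M.U2) :
    0 ≤ lumpedG2 σ t ι a b := by
  unfold lumpedG2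
  split_ifs with hpos
  · exact div_nonneg (mul_nonneg (by positivity) (reachAct2_nonneg σ t _ _ b)) hpos.2.le
  · positivity

lemma sum_lumpedF1 (σ : TeamStrategy M) (t : ℕ) (ι : HistC M) (a : M.X1) :
    ∑ m, lumpedF1 σ t ι a m = 1 := by
  unfold lumpedF1
  split_ifs with hpos
  · rw [← Finset.sum_div, sum_reachComm1, div_self hpos.ne']
  · norm_num

lemma sum_lumpedF2 (σ : TeamStrategy M) (t : ℕ) (ι : HistC M) (a : M.X2) :
    ∑ m, lumpedF2 σ t ι a m = 1 := by
  unfold lumpedF2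
  split_ifs with hpos
  · rw [← Finset.sum_div, sum_reachComm2, div_self hpos.ne']
  · norm_num

lemma sum_lumpedG1 (σ : TeamStrategy M) (t : ℕ) (ι : HistC M) (a : M.X1) :
    ∑ b, lumpedG1 σ t ι a b = 1 := by
  have hc : (Fintype.card M.U1 : ℝ) ≠ 0 := by simp [Fintype.card_ne_zero]
  unfold lumpedG1
  split_ifs with hpos
  · rw [← Finset.sum_div, ← Finset.mul_sum, sum_reachAct1 σ hpos.1]
    field_simp [hpos.2.ne']
  · simp [hc]

lemma sum_lumpedG2 (σ : TeamStrategy M) (t : ℕ) (ι : HistC M) (a : M.X2) :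
    ∑ b, lumpedG2 σ t ι a b = 1 := by
  have hc : (Fintype.card M.U2 : ℝ) ≠ 0 := by simp [Fintype.card_ne_zero]
  unfold lumpedG2
  split_ifs with hpos
  · rw [← Finset.sum_div, ← Finset.mul_sum, sum_reachAct2 σ hpos.1]
    field_simp [hpos.2.ne']
  · simp [hc]

def commonOf1 (h : Hist1 M) : HistC M :=
  (h.1, h.2.2.2.1, h.2.2.2.2.1, h.2.2.2.2.2.1, h.2.2.2.2.2.2)
noncomputable def stateOf1 (t : ℕ) (h : Hist1 M) : M.X1 :=
  h.2.1.getD t (Classical.arbitrary M.X1)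
def commonOf2 (h : Hist2 M) : HistC M :=
  (h.1, h.2.2.2.1, h.2.2.2.2.1, h.2.2.2.2.2.1, h.2.2.2.2.2.2)
noncomputable def stateOf2 (t : ℕ) (h : Hist2 M) : M.X2 :=
  h.2.1.getD t (Classical.arbitrary M.X2)

lemma stateOf1_info1 (t : ℕ) (ω : Traj M) : stateOf1 t (info1 t ω) = X1v ω t :=
  pre_getD_of_lt t.lt_succ_self _ _

lemma stateOf1_info1p (t : ℕ) (ω : Traj M) : stateOf1 t (info1p t ω) = X1v ω t :=
  pre_getD_of_lt t.lt_succ_self _ _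

lemma stateOf2_info2 (t : ℕ) (ω : Traj M) : stateOf2 t (info2 t ω) = X2v ω t :=
  pre_getD_of_lt t.lt_succ_self _ _

lemma stateOf2_info2p (t : ℕ) (ω : Traj M) : stateOf2 t (info2p t ω) = X2v ω t :=
  pre_getD_of_lt t.lt_succ_self _ _

noncomputable def lumped (σ : TeamStrategy M) : TeamStrategy M where
  f1 t h := lumpedF1 σ t (commonOf1 h) (stateOf1 t h)
  f2 t h := lumpedF2 σ t (commonOf2 h) (stateOf2 t h)
  g1 t h := lumpedG1 σ t (commonOf1 h) (stateOf1 t h)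
  g2 t h := lumpedG2 σ t (commonOf2 h) (stateOf2 t h)
  f1_nonneg _ _ := lumpedF1_nonneg σ _ _ _
  f2_nonneg _ _ := lumpedF2_nonneg σ _ _ _
  g1_nonneg _ _ := lumpedG1_nonneg σ _ _ _
  g2_nonneg _ _ := lumpedG2_nonneg σ _ _ _
  f1_sum _ _ := sum_lumpedF1 σ _ _ _
  f2_sum _ _ := sum_lumpedF2 σ _ _ _
  g1_sum _ _ := sum_lumpedG1 σ _ _ _
  g2_sum _ _ := sum_lumpedG2 σ _ _ _

lemma teamCom_setPriv1 (t : ℕ) (ω : Traj M) (p : PrivPath1 M) :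
    teamCom t (setPriv1 ω p) = teamCom t ω := rfl
lemma teamComP_setPriv1 (t : ℕ) (ω : Traj M) (p : PrivPath1 M) :
    teamComP t (setPriv1 ω p) = teamComP t ω := rfl
lemma teamCom_setPriv2 (t : ℕ) (ω : Traj M) (p : PrivPath2 M) :
    teamCom t (setPriv2 ω p) = teamCom t ω := rfl
lemma teamComP_setPriv2 (t : ℕ) (ω : Traj M) (p : PrivPath2 M) :
    teamComP t (setPriv2 ω p) = teamComP t ω := rfl

lemma lumped_f1_info1 (σ : TeamStrategy M) (n : ℕ) (ω : Traj M) :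
    (lumped σ).f1 n (info1 n ω) = lumpedF1 σ n (teamCom n ω) (X1v ω n) :=
  congrArg (lumpedF1 σ n (teamCom n ω)) (stateOf1_info1 n ω)

lemma lumped_f2_info2 (σ : TeamStrategy M) (n : ℕ) (ω : Traj M) :
    (lumped σ).f2 n (info2 n ω) = lumpedF2 σ n (teamCom n ω) (X2v ω n) :=
  congrArg (lumpedF2 σ n (teamCom n ω)) (stateOf2_info2 n ω)

lemma lumped_g1_info1p (σ : TeamStrategy M) (n : ℕ) (ω : Traj M) :
    (lumped σ).g1 n (info1p n ω) = lumpedG1 σ n (teamComP n ω) (X1v ω n) :=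
  congrArg (lumpedG1 σ n (teamComP n ω)) (stateOf1_info1p n ω)

lemma lumped_g2_info2p (σ : TeamStrategy M) (n : ℕ) (ω : Traj M) :
    (lumped σ).g2 n (info2p n ω) = lumpedG2 σ n (teamComP n ω) (X2v ω n) :=
  congrArg (lumpedG2 σ n (teamComP n ω)) (stateOf2_info2p n ω)

noncomputable def zMatchAt1 (ω : Traj M) (n : ℕ) (a : M.X1) : ℝ :=
  match Zv ω n with
  | none => 1
  | some q => if q.1 = a then 1 else 0

noncomputable def zMatchAt2 (ω : Traj M) (n : ℕ) (a : M.X2) : ℝ :=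
  match Zv ω n with
  | none => 1
  | some q => if q.2 = a then 1 else 0

lemma zMatch1_mul_indicator (ω : Traj M) (p : PrivPath1 M) (n : ℕ) (a : M.X1) :
    zMatch1 (setPriv1 ω p) n * (if X1v (setPriv1 ω p) n = a then (1:ℝ) else 0) =
    zMatchAt1 ω n a * (if X1v (setPriv1 ω p) n = a then (1:ℝ) else 0) := by
  by_cases h : X1v (setPriv1 ω p) n = a
  · rw [if_pos h]
    unfold zMatch1 zMatchAt1
    rw [show Zv (setPriv1 ω p) n = Zv ω n from rfl, ← h]
  · rw [if_neg h, mul_zero, mul_zero]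

lemma zMatch2_mul_indicator (ω : Traj M) (p : PrivPath2 M) (n : ℕ) (a : M.X2) :
    zMatch2 (setPriv2 ω p) n * (if X2v (setPriv2 ω p) n = a then (1:ℝ) else 0) =
    zMatchAt2 ω n a * (if X2v (setPriv2 ω p) n = a then (1:ℝ) else 0) := by
  by_cases h : X2v (setPriv2 ω p) n = a
  · rw [if_pos h]
    unfold zMatch2 zMatchAt2
    rw [show Zv (setPriv2 ω p) n = Zv ω n from rfl, ← h]
  · rw [if_neg h, mul_zero, mul_zero]

lemma reachMsg1_eq (σ : TeamStrategy M) (n : ℕ) (ω : Traj M) (a : M.X1) :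
    reachMsg1 σ n ω a = zMatchAt1 ω n a * reachComm1 σ n ω a (M1v ω n) := by
  rw [reachMsg1, reachComm1, Finset.mul_sum]
  refine Finset.sum_congr rfl fun p _ => ?_
  rw [mul_assoc _ (zMatch1 _ _), zMatch1_mul_indicator]
  ring

lemma reachMsg2_eq (σ : TeamStrategy M) (n : ℕ) (ω : Traj M) (a : M.X2) :
    reachMsg2 σ n ω a = zMatchAt2 ω n a * reachComm2 σ n ω a (M2v ω n) := by
  rw [reachMsg2, reachComm2, Finset.mul_sum]
  refine Finset.sum_congr rfl fun p _ => ?_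
  rw [mul_assoc _ (zMatch2 _ _), zMatch2_mul_indicator]
  ring

lemma reachComm1_lumped_eq (σ : TeamStrategy M) (n : ℕ) (ω : Traj M) (a : M.X1) (m : Bool) :
    reachComm1 (lumped σ) n ω a m =
      lumpedF1 σ n (teamCom n ω) a m * reach1 (lumped σ) n ω a := by
  unfold reachComm1 reach1
  rw [Finset.mul_sum]
  apply Finset.sum_congr rfl
  intro p _
  rw [lumped_f1_info1 σ n (setPriv1 ω p), teamCom_setPriv1]
  by_cases h : X1v (setPriv1 ω p) n = a
  · rw [h]
    ring
  · rw [if_neg h]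
    ring

lemma reachComm2_lumped_eq (σ : TeamStrategy M) (n : ℕ) (ω : Traj M) (a : M.X2) (m : Bool) :
    reachComm2 (lumped σ) n ω a m =
      lumpedF2 σ n (teamCom n ω) a m * reach2 (lumped σ) n ω a := by
  unfold reachComm2 reach2
  rw [Finset.mul_sum]
  apply Finset.sum_congr rfl
  intro p _
  rw [lumped_f2_info2 σ n (setPriv2 ω p), teamCom_setPriv2]
  by_cases h : X2v (setPriv2 ω p) n = a
  · rw [h]
    ring
  · rw [if_neg h]
    ring

/-- Where `reach1 σ` vanishes so does `reachComm1 σ` (`reachComm1_eq_zero`), which makes the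
default value of `lumpedF1` harmless. -/
lemma reachComm1_lumped_of_reach1 (σ : TeamStrategy M) {n : ℕ} (hn : n < M.T)
    (hMR : ∀ ω a, reach1 (lumped σ) n ω a = reach1 σ n ω a)
    (ω : Traj M) (a : M.X1) (m : Bool) :
    reachComm1 (lumped σ) n ω a m = reachComm1 σ n ω a m := by
  rw [reachComm1_lumped_eq, hMR ω a]
  unfold lumpedF1
  by_cases hpos : 0 < reach1 σ n (trajOfCommon (teamCom n ω)) a
  · rw [if_pos hpos, reachComm1_trajOfCommon σ hn, reach1_trajOfCommon σ hn]
    rw [reach1_trajOfCommon σ hn] at hpos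
    rw [div_mul_cancel₀ _ hpos.ne']
  · rw [if_neg hpos]
    rw [reach1_trajOfCommon σ hn] at hpos
    have h0 : reach1 σ n ω a = 0 :=
      le_antisymm (not_lt.mp hpos) (reach1_nonneg σ n ω a)
    rw [h0, mul_zero, reachComm1_eq_zero h0]

lemma reachComm2_lumped_of_reach2 (σ : TeamStrategy M) {n : ℕ} (hn : n < M.T)
    (hMR : ∀ ω a, reach2 (lumped σ) n ω a = reach2 σ n ω a)
    (ω : Traj M) (a : M.X2) (m : Bool) :
    reachComm2 (lumped σ) n ω a m = reachComm2 σ n ω a m := by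
  rw [reachComm2_lumped_eq, hMR ω a]
  unfold lumpedF2
  by_cases hpos : 0 < reach2 σ n (trajOfCommon (teamCom n ω)) a
  · rw [if_pos hpos, reachComm2_trajOfCommon σ hn, reach2_trajOfCommon σ hn]
    rw [reach2_trajOfCommon σ hn] at hpos
    rw [div_mul_cancel₀ _ hpos.ne']
  · rw [if_neg hpos]
    rw [reach2_trajOfCommon σ hn] at hpos
    have h0 : reach2 σ n ω a = 0 :=
      le_antisymm (not_lt.mp hpos) (reach2_nonneg σ n ω a)
    rw [h0, mul_zero, reachComm2_eq_zero h0]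

lemma reachMsg1_lumped_of_reach1 (σ : TeamStrategy M) {n : ℕ} (hn : n < M.T)
    (hMR : ∀ ω a, reach1 (lumped σ) n ω a = reach1 σ n ω a)
    (ω : Traj M) (a : M.X1) :
    reachMsg1 (lumped σ) n ω a = reachMsg1 σ n ω a := by
  rw [reachMsg1_eq, reachMsg1_eq, reachComm1_lumped_of_reach1 σ hn hMR ω a]

lemma reachMsg2_lumped_of_reach2 (σ : TeamStrategy M) {n : ℕ} (hn : n < M.T)
    (hMR : ∀ ω a, reach2 (lumped σ) n ω a = reach2 σ n ω a)
    (ω : Traj M) (a : M.X2) :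
    reachMsg2 (lumped σ) n ω a = reachMsg2 σ n ω a := by
  rw [reachMsg2_eq, reachMsg2_eq, reachComm2_lumped_of_reach2 σ hn hMR ω a]

lemma reachAct1_lumped_eq (σ : TeamStrategy M) {n : ℕ} (hn : n < M.T)
    (ω : Traj M) (a : M.X1) (b : M.U1) :
    reachAct1 (lumped σ) n ω a b =
      lumpedG1 σ n (teamComP n ω) a b *
        ((Fintype.card M.U1 : ℝ)⁻¹ * reachMsg1 (lumped σ) n ω a) := by
  have hp : ∀ p : PrivPath1 M,
      privWeightAct1 (lumped σ) n (setPriv1 ω p) *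
        (if X1v (setPriv1 ω p) n = a then (1:ℝ) else 0) *
        (if U1v (setPriv1 ω p) n = b then (1:ℝ) else 0) =
      lumpedG1 σ n (teamComP n ω) a b *
        (privWeightMsg1 (lumped σ) n (setPriv1 ω p) *
          (if X1v (setPriv1 ω p) n = a then (1:ℝ) else 0) *
          (if U1v (setPriv1 ω p) n = b then (1:ℝ) else 0)) := fun p => by
    rw [privWeightAct1, privWeightMsg1, lumped_g1_info1p σ n (setPriv1 ω p),
      teamComP_setPriv1]
    by_cases h1 : X1v (setPriv1 ω p) n = a
    · by_cases h2 : U1v (setPriv1 ω p) n = b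
      · rw [h1, h2]
        ring
      · simp [h2]
    · simp [h1]
  simp only [reachAct1, hp, ← Finset.mul_sum]
  congr 1
  exact (privULens n).sum_mul_indicator_get _
    (fun p c => congrArg (· * _) (privWeightMsg1_setPriv1_setPrivU (lumped σ) hn ω p c)) b

lemma reachAct2_lumped_eq (σ : TeamStrategy M) {n : ℕ} (hn : n < M.T)
    (ω : Traj M) (a : M.X2) (b : M.U2) :
    reachAct2 (lumped σ) n ω a b =
      lumpedG2 σ n (teamComP n ω) a b *
        ((Fintype.card M.U2 : ℝ)⁻¹ * reachMsg2 (lumped σ) n ω a) := by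
  have hp : ∀ p : PrivPath2 M,
      privWeightAct2 (lumped σ) n (setPriv2 ω p) *
        (if X2v (setPriv2 ω p) n = a then (1:ℝ) else 0) *
        (if U2v (setPriv2 ω p) n = b then (1:ℝ) else 0) =
      lumpedG2 σ n (teamComP n ω) a b *
        (privWeightMsg2 (lumped σ) n (setPriv2 ω p) *
          (if X2v (setPriv2 ω p) n = a then (1:ℝ) else 0) *
          (if U2v (setPriv2 ω p) n = b then (1:ℝ) else 0)) := fun p => by
    rw [privWeightAct2, privWeightMsg2, lumped_g2_info2p σ n (setPriv2 ω p),
      teamComP_setPriv2]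
    by_cases h1 : X2v (setPriv2 ω p) n = a
    · by_cases h2 : U2v (setPriv2 ω p) n = b
      · rw [h1, h2]
        ring
      · simp [h2]
    · simp [h1]
  simp only [reachAct2, hp, ← Finset.mul_sum]
  congr 1
  exact (privULens n).sum_mul_indicator_get _
    (fun p c => congrArg (· * _) (privWeightMsg2_setPriv2_setPrivU (lumped σ) hn ω p c)) b

lemma reachAct1_lumped_of_reach1 (σ : TeamStrategy M) {n : ℕ} (hn : n < M.T)
    (hMR : ∀ ω a, reach1 (lumped σ) n ω a = reach1 σ n ω a)
    (ω : Traj M) (a : M.X1) (b : M.U1) :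
    reachAct1 (lumped σ) n ω a b = reachAct1 σ n ω a b := by
  have hc : (Fintype.card M.U1 : ℝ) ≠ 0 := by
    simp [Fintype.card_ne_zero]
  rw [reachAct1_lumped_eq σ hn ω a b, reachMsg1_lumped_of_reach1 σ hn hMR ω a]
  unfold lumpedG1
  by_cases hpos : 0 < reachMsg1 σ n (trajOfCommon (teamComP n ω)) a
  · rw [if_pos ⟨hn, hpos⟩, reachAct1_trajOfCommon σ hn, reachMsg1_trajOfCommon σ hn]
    rw [reachMsg1_trajOfCommon σ hn] at hpos
    field_simp
  · rw [if_neg fun h => hpos h.2]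
    rw [reachMsg1_trajOfCommon σ hn] at hpos
    have h0 : reachMsg1 σ n ω a = 0 :=
      le_antisymm (not_lt.mp hpos) (reachMsg1_nonneg σ n ω a)
    rw [h0, reachAct1_eq_zero hn h0 b]
    ring

lemma reachAct2_lumped_of_reach2 (σ : TeamStrategy M) {n : ℕ} (hn : n < M.T)
    (hMR : ∀ ω a, reach2 (lumped σ) n ω a = reach2 σ n ω a)
    (ω : Traj M) (a : M.X2) (b : M.U2) :
    reachAct2 (lumped σ) n ω a b = reachAct2 σ n ω a b := by
  have hc : (Fintype.card M.U2 : ℝ) ≠ 0 := by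
    simp [Fintype.card_ne_zero]
  rw [reachAct2_lumped_eq σ hn ω a b, reachMsg2_lumped_of_reach2 σ hn hMR ω a]
  unfold lumpedG2
  by_cases hpos : 0 < reachMsg2 σ n (trajOfCommon (teamComP n ω)) a
  · rw [if_pos ⟨hn, hpos⟩, reachAct2_trajOfCommon σ hn, reachMsg2_trajOfCommon σ hn]
    rw [reachMsg2_trajOfCommon σ hn] at hpos
    field_simp
  · rw [if_neg fun h => hpos h.2]
    rw [reachMsg2_trajOfCommon σ hn] at hpos
    have h0 : reachMsg2 σ n ω a = 0 :=
      le_antisymm (not_lt.mp hpos) (reachMsg2_nonneg σ n ω a)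
    rw [h0, reachAct2_eq_zero hn h0 b]
    ring

lemma privWeight1_succ (σ : TeamStrategy M) (n : ℕ) (ω : Traj M) :
    privWeight1 σ (n+1) ω = privWeight1 σ n ω * privFactor1 σ n ω := by
  unfold privWeight1
  rw [Finset.prod_range_succ]
  ring

lemma privWeight2_succ (σ : TeamStrategy M) (n : ℕ) (ω : Traj M) :
    privWeight2 σ (n+1) ω = privWeight2 σ n ω * privFactor2 σ n ω := by
  unfold privWeight2
  rw [Finset.prod_range_succ]
  ring

lemma X1v_setPriv1_setPrivX_of_ne {k s : ℕ} (hs : s < M.T) (hk : k < M.T) (hne : s ≠ k)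
    (ω : Traj M) (p : PrivPath1 M) (v : M.X1) :
    X1v (setPriv1 ω (setPrivX k p v)) s = X1v (setPriv1 ω p) s := by
  simp [X1v_setPriv1, setPrivX, Function.update_of_ne (idx_ne_idx hs hk hne)]

lemma X2v_setPriv2_setPrivX_of_ne {k s : ℕ} (hs : s < M.T) (hk : k < M.T) (hne : s ≠ k)
    (ω : Traj M) (p : PrivPath2 M) (v : M.X2) :
    X2v (setPriv2 ω (setPrivX k p v)) s = X2v (setPriv2 ω p) s := by
  simp [X2v_setPriv2, setPrivX, Function.update_of_ne (idx_ne_idx hs hk hne)]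

lemma privWeight1_setPriv1_setPrivX (σ : TeamStrategy M) {n : ℕ} (hn1 : n + 1 < M.T)
    (ω : Traj M) (p : PrivPath1 M) (v : M.X1) :
    privWeight1 σ n (setPriv1 ω (setPrivX (n+1) p v)) = privWeight1 σ n (setPriv1 ω p) :=
  privWeight1_congr σ (fun _ _ => rfl)
    (fun s hs => X1v_setPriv1_setPrivX_of_ne (by omega) hn1 (by omega) ω p v)
    (fun _ _ => rfl) (fun _ _ => rfl) (fun _ _ => rfl) (fun _ _ => rfl)
    (fun _ _ => rfl) (fun _ _ => rfl)

lemma privWeight2_setPriv2_setPrivX (σ : TeamStrategy M) {n : ℕ} (hn1 : n + 1 < M.T)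
    (ω : Traj M) (p : PrivPath2 M) (v : M.X2) :
    privWeight2 σ n (setPriv2 ω (setPrivX (n+1) p v)) = privWeight2 σ n (setPriv2 ω p) :=
  privWeight2_congr σ (fun _ _ => rfl)
    (fun s hs => X2v_setPriv2_setPrivX_of_ne (by omega) hn1 (by omega) ω p v)
    (fun _ _ => rfl) (fun _ _ => rfl) (fun _ _ => rfl) (fun _ _ => rfl)
    (fun _ _ => rfl) (fun _ _ => rfl)

lemma info1_setPriv1_setPrivX {n : ℕ} (hn1 : n + 1 < M.T)
    (ω : Traj M) (p : PrivPath1 M) (v : M.X1) :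
    info1 n (setPriv1 ω (setPrivX (n+1) p v)) = info1 n (setPriv1 ω p) :=
  info1_congr (fun _ _ => rfl)
    (fun s hs => X1v_setPriv1_setPrivX_of_ne (by omega) hn1 (by omega) ω p v)
    (fun _ _ => rfl) (fun _ _ => rfl) (fun _ _ => rfl) (fun _ _ => rfl)
    (fun _ _ => rfl) (fun _ _ => rfl)

lemma info1p_setPriv1_setPrivX {n : ℕ} (hn1 : n + 1 < M.T)
    (ω : Traj M) (p : PrivPath1 M) (v : M.X1) :
    info1p n (setPriv1 ω (setPrivX (n+1) p v)) = info1p n (setPriv1 ω p) :=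
  info1p_congr (fun _ _ => rfl)
    (fun s hs => X1v_setPriv1_setPrivX_of_ne (by omega) hn1 (by omega) ω p v)
    (fun _ _ => rfl) (fun _ _ => rfl) (fun _ _ => rfl) (fun _ _ => rfl)
    (fun _ _ => rfl) (fun _ _ => rfl)

lemma info2_setPriv2_setPrivX {n : ℕ} (hn1 : n + 1 < M.T)
    (ω : Traj M) (p : PrivPath2 M) (v : M.X2) :
    info2 n (setPriv2 ω (setPrivX (n+1) p v)) = info2 n (setPriv2 ω p) :=
  info2_congr (fun _ _ => rfl)
    (fun s hs => X2v_setPriv2_setPrivX_of_ne (by omega) hn1 (by omega) ω p v)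
    (fun _ _ => rfl) (fun _ _ => rfl) (fun _ _ => rfl) (fun _ _ => rfl)
    (fun _ _ => rfl) (fun _ _ => rfl)

lemma info2p_setPriv2_setPrivX {n : ℕ} (hn1 : n + 1 < M.T)
    (ω : Traj M) (p : PrivPath2 M) (v : M.X2) :
    info2p n (setPriv2 ω (setPrivX (n+1) p v)) = info2p n (setPriv2 ω p) :=
  info2p_congr (fun _ _ => rfl)
    (fun s hs => X2v_setPriv2_setPrivX_of_ne (by omega) hn1 (by omega) ω p v)
    (fun _ _ => rfl) (fun _ _ => rfl) (fun _ _ => rfl) (fun _ _ => rfl)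
    (fun _ _ => rfl) (fun _ _ => rfl)

lemma privWeightAct1_setPriv1_setPrivX (σ : TeamStrategy M) {n : ℕ} (hn1 : n + 1 < M.T)
    (ω : Traj M) (p : PrivPath1 M) (v : M.X1) :
    privWeightAct1 σ n (setPriv1 ω (setPrivX (n+1) p v)) =
      privWeightAct1 σ n (setPriv1 ω p) := by
  have hn : n < M.T := by omega
  unfold privWeightAct1
  rw [privWeight1_setPriv1_setPrivX σ hn1, info1_setPriv1_setPrivX hn1,
    info1p_setPriv1_setPrivX hn1,
    zMatch1_congr (ω := setPriv1 ω (setPrivX (n+1) p v)) (ω' := setPriv1 ω p) rfl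
      (X1v_setPriv1_setPrivX_of_ne hn hn1 (by omega) ω p v)]
  simp only [M1v_setPriv1, U1v_setPriv1, setPrivX]

lemma privWeightAct2_setPriv2_setPrivX (σ : TeamStrategy M) {n : ℕ} (hn1 : n + 1 < M.T)
    (ω : Traj M) (p : PrivPath2 M) (v : M.X2) :
    privWeightAct2 σ n (setPriv2 ω (setPrivX (n+1) p v)) =
      privWeightAct2 σ n (setPriv2 ω p) := by
  have hn : n < M.T := by omega
  unfold privWeightAct2
  rw [privWeight2_setPriv2_setPrivX σ hn1, info2_setPriv2_setPrivX hn1,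
    info2p_setPriv2_setPrivX hn1,
    zMatch2_congr (ω := setPriv2 ω (setPrivX (n+1) p v)) (ω' := setPriv2 ω p) rfl
      (X2v_setPriv2_setPrivX_of_ne hn hn1 (by omega) ω p v)]
  simp only [M2v_setPriv2, U2v_setPriv2, setPrivX]

lemma sum_privWeightAct1_mul (σ : TeamStrategy M) (t : ℕ) (ω : Traj M)
    (Ψ : M.X1 → M.U1 → ℝ) :
    ∑ p : PrivPath1 M, privWeightAct1 σ t (setPriv1 ω p) *
        Ψ (X1v (setPriv1 ω p) t) (U1v (setPriv1 ω p) t) =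
      ∑ a : M.X1, ∑ b : M.U1, reachAct1 σ t ω a b * Ψ a b :=
  Fintype.sum_mul_eq_sum_sum_fiber _ _ _ Ψ

lemma sum_privWeightAct2_mul (σ : TeamStrategy M) (t : ℕ) (ω : Traj M)
    (Ψ : M.X2 → M.U2 → ℝ) :
    ∑ p : PrivPath2 M, privWeightAct2 σ t (setPriv2 ω p) *
        Ψ (X2v (setPriv2 ω p) t) (U2v (setPriv2 ω p) t) =
      ∑ a : M.X2, ∑ b : M.U2, reachAct2 σ t ω a b * Ψ a b :=
  Fintype.sum_mul_eq_sum_sum_fiber _ _ _ Ψ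

lemma reach1_succ (σ : TeamStrategy M) {n : ℕ} (hn1 : n + 1 < M.T) (ω : Traj M)
    (a' : M.X1) :
    reach1 σ (n+1) ω a' = (Fintype.card M.X1 : ℝ)⁻¹ *
      ∑ a : M.X1, ∑ b : M.U1, reachAct1 σ n ω a b * M.trans1 (X0v ω n) a b a' := by
  have hn : n < M.T := by omega
  have hstep : ∀ p : PrivPath1 M, privWeight1 σ (n+1) (setPriv1 ω p) *
      (if X1v (setPriv1 ω p) (n+1) = a' then 1 else 0) =
      privWeightAct1 σ n (setPriv1 ω p) *
        M.trans1 (X0v ω n) (X1v (setPriv1 ω p) n) (U1v (setPriv1 ω p) n) a' *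
        (if X1v (setPriv1 ω p) (n+1) = a' then 1 else 0) := fun p => by
    rw [privWeight1_succ, privFactor1, transFactor1, if_pos hn1, privWeightAct1]
    split_ifs with h
    · rw [h, X0v_setPriv1]
      ring
    · simp
  rw [reach1, Finset.sum_congr rfl fun p _ => hstep p]
  erw [(privXLens (n+1)).sum_mul_indicator_get _ (fun p v => by
    dsimp only [privXLens]
    rw [privWeightAct1_setPriv1_setPrivX σ hn1,
      X1v_setPriv1_setPrivX_of_ne hn hn1 (by omega)]
    rfl) a']
  rw [sum_privWeightAct1_mul σ n ω fun a b => M.trans1 (X0v ω n) a b a']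

lemma reach2_succ (σ : TeamStrategy M) {n : ℕ} (hn1 : n + 1 < M.T) (ω : Traj M)
    (a' : M.X2) :
    reach2 σ (n+1) ω a' = (Fintype.card M.X2 : ℝ)⁻¹ *
      ∑ a : M.X2, ∑ b : M.U2, reachAct2 σ n ω a b * M.trans2 (X0v ω n) a b a' := by
  have hn : n < M.T := by omega
  have hstep : ∀ p : PrivPath2 M, privWeight2 σ (n+1) (setPriv2 ω p) *
      (if X2v (setPriv2 ω p) (n+1) = a' then 1 else 0) =
      privWeightAct2 σ n (setPriv2 ω p) *
        M.trans2 (X0v ω n) (X2v (setPriv2 ω p) n) (U2v (setPriv2 ω p) n) a' *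
        (if X2v (setPriv2 ω p) (n+1) = a' then 1 else 0) := fun p => by
    rw [privWeight2_succ, privFactor2, transFactor2, if_pos hn1, privWeightAct2]
    split_ifs with h
    · rw [h, X0v_setPriv2]
      ring
    · simp
  rw [reach2, Finset.sum_congr rfl fun p _ => hstep p]
  erw [(privXLens (n+1)).sum_mul_indicator_get _ (fun p v => by
    dsimp only [privXLens]
    rw [privWeightAct2_setPriv2_setPrivX σ hn1,
      X2v_setPriv2_setPrivX_of_ne hn hn1 (by omega)]
    rfl) a']
  rw [sum_privWeightAct2_mul σ n ω fun a b => M.trans2 (X0v ω n) a b a']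

lemma reach1_zero (σ σ' : TeamStrategy M) (ω : Traj M) (a : M.X1) :
    reach1 σ 0 ω a = reach1 σ' 0 ω a := by
  simp [reach1, privWeight1]

lemma reach2_zero (σ σ' : TeamStrategy M) (ω : Traj M) (a : M.X2) :
    reach2 σ 0 ω a = reach2 σ' 0 ω a := by
  simp [reach2, privWeight2]

lemma reach1_lumped (σ : TeamStrategy M) {n : ℕ} (hn : n < M.T) (ω : Traj M) (a : M.X1) :
    reach1 (lumped σ) n ω a = reach1 σ n ω a := by
  induction n generalizing ω a with
  | zero => exact reach1_zero _ _ ω a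
  | succ n ih =>
    have hn' : n < M.T := by omega
    simp only [reach1_succ _ hn, reachAct1_lumped_of_reach1 σ hn' (ih hn')]

lemma reach2_lumped (σ : TeamStrategy M) {n : ℕ} (hn : n < M.T) (ω : Traj M) (a : M.X2) :
    reach2 (lumped σ) n ω a = reach2 σ n ω a := by
  induction n generalizing ω a with
  | zero => exact reach2_zero _ _ ω a
  | succ n ih =>
    have hn' : n < M.T := by omega
    simp only [reach2_succ _ hn, reachAct2_lumped_of_reach2 σ hn' (ih hn')]

lemma reachAct1_lumped (σ : TeamStrategy M) {t : ℕ} (ht : t < M.T) (ω : Traj M)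
    (a : M.X1) (b : M.U1) : reachAct1 (lumped σ) t ω a b = reachAct1 σ t ω a b :=
  reachAct1_lumped_of_reach1 σ ht (reach1_lumped σ ht) ω a b

lemma reachAct2_lumped (σ : TeamStrategy M) {t : ℕ} (ht : t < M.T) (ω : Traj M)
    (a : M.X2) (b : M.U2) : reachAct2 (lumped σ) t ω a b = reachAct2 σ t ω a b :=
  reachAct2_lumped_of_reach2 σ ht (reach2_lumped σ ht) ω a b

/-! ## Expected cost -/

noncomputable def commonKernel (γ : AdvStrategy M (HistC M)) (t : ℕ) (ω : Traj M) : ℝ :=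
  commonWeight γ t ω * erasureWeight ω t * M.obs (Zv ω t) (Mv ω t) (X0v ω t) (Yv ω t)

lemma prefixProb_mul_teamKernel (σ : TeamStrategy M) (γ : AdvStrategy M (HistC M)) (t : ℕ)
    (ω : Traj M) :
    prefixProb σ γ t ω * teamKernel σ t ω =
      privWeightAct1 σ t ω * (privWeightAct2 σ t ω * commonKernel γ t ω) := by
  rw [prefixProb_eq_mul]
  unfold teamKernel commonKernel privWeightAct1 privWeightAct2
  rw [zKer_eq_mul]
  ring

lemma sum_privWeightAct1_mul_eq (σ : TeamStrategy M) (t : ℕ)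
    (Ψ : Traj M → M.X1 → M.U1 → ℝ)
    (hΨ : ∀ ω p, Ψ (setPriv1 ω p) = Ψ ω) :
    ∑ ω : Traj M, privWeightAct1 σ t ω * Ψ ω (X1v ω t) (U1v ω t) =
      (Fintype.card (PrivPath1 M) : ℝ)⁻¹ *
        ∑ ω : Traj M, ∑ a : M.X1, ∑ b : M.U1, reachAct1 σ t ω a b * Ψ ω a b := by
  rw [priv1Lens.sum_eq_inv_card_mul_sum_sum_set]
  dsimp only [priv1Lens]
  simp only [hΨ, sum_privWeightAct1_mul]

lemma sum_privWeightAct2_mul_eq (σ : TeamStrategy M) (t : ℕ)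
    (Ψ : Traj M → M.X2 → M.U2 → ℝ)
    (hΨ : ∀ ω p, Ψ (setPriv2 ω p) = Ψ ω) :
    ∑ ω : Traj M, privWeightAct2 σ t ω * Ψ ω (X2v ω t) (U2v ω t) =
      (Fintype.card (PrivPath2 M) : ℝ)⁻¹ *
        ∑ ω : Traj M, ∑ a : M.X2, ∑ b : M.U2, reachAct2 σ t ω a b * Ψ ω a b := by
  rw [priv2Lens.sum_eq_inv_card_mul_sum_sum_set]
  dsimp only [priv2Lens]
  simp only [hΨ, sum_privWeightAct2_mul]

/-- Given the common information, the two private paths enter only through the reach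
weights `reachAct1`, `reachAct2`. -/
lemma sum_prefixProb_mul_teamKernel_mul (σ : TeamStrategy M) (γ : AdvStrategy M (HistC M))
    (t : ℕ) (Φ : HistC M → M.X1 → M.X2 → M.U1 → M.U2 → ℝ) :
    ∑ ω : Traj M, prefixProb σ γ t ω * teamKernel σ t ω *
        Φ (teamComP t ω) (X1v ω t) (X2v ω t) (U1v ω t) (U2v ω t) =
      (Fintype.card (PrivPath1 M) : ℝ)⁻¹ * ((Fintype.card (PrivPath2 M) : ℝ)⁻¹ *
        ∑ ω : Traj M, ∑ a2 : M.X2, ∑ b2 : M.U2, reachAct2 σ t ω a2 b2 *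
          (commonKernel γ t ω * ∑ a1 : M.X1, ∑ b1 : M.U1, reachAct1 σ t ω a1 b1 *
            Φ (teamComP t ω) a1 a2 b1 b2)) := by
  let Ψ₁ : Traj M → M.X1 → M.U1 → ℝ := fun ω a1 b1 =>
    privWeightAct2 σ t ω * (commonKernel γ t ω * Φ (teamComP t ω) a1 (X2v ω t) b1 (U2v ω t))
  let Ψ₂ : Traj M → M.X2 → M.U2 → ℝ := fun ω a2 b2 =>
    commonKernel γ t ω * ∑ a1 : M.X1, ∑ b1 : M.U1,
      reachAct1 σ t ω a1 b1 * Φ (teamComP t ω) a1 a2 b1 b2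
  calc _ = ∑ ω : Traj M, privWeightAct1 σ t ω * Ψ₁ ω (X1v ω t) (U1v ω t) :=
        Finset.sum_congr rfl fun ω _ => by
          simp only [Ψ₁, ← mul_assoc, prefixProb_mul_teamKernel]
    _ = (Fintype.card (PrivPath1 M) : ℝ)⁻¹ *
          ∑ ω : Traj M, privWeightAct2 σ t ω * Ψ₂ ω (X2v ω t) (U2v ω t) := by
        rw [sum_privWeightAct1_mul_eq σ t Ψ₁ fun _ _ => rfl]
        refine congrArg _ (Finset.sum_congr rfl fun ω _ => ?_)
        simp only [Ψ₁, Ψ₂, Finset.mul_sum]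
        exact Finset.sum_congr rfl fun a _ => Finset.sum_congr rfl fun b _ => by ring
    _ = _ := by rw [sum_privWeightAct2_mul_eq σ t Ψ₂ fun _ _ => rfl]

lemma stageCost_setState {t : ℕ} (ht1 : t + 1 < M.T) (ω : Traj M) (b : StateVars M) :
    stageCost t (setState (t+1) ω b) = stageCost t ω := by
  unfold stageCost
  rw [X0v_setState_of_ne (by omega) ht1 (by omega), X1v_setState_of_ne (by omega) ht1 (by omega),
    X2v_setState_of_ne (by omega) ht1 (by omega)]
  rfl

lemma teamKernel_setAdv (σ : TeamStrategy M) {t : ℕ} (ht : t < M.T) (ω : Traj M)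
    (u : M.Ua) : teamKernel σ t (setAdv t ω u) = teamKernel σ t ω := by
  have hua : ∀ s, s < t → UAv (setAdv t ω u) s = UAv ω s :=
    fun s hs => UAv_setAdv_of_ne (hs.trans ht) ht hs.ne ω u
  unfold teamKernel
  rw [info1_congr (ω := setAdv t ω u) (ω' := ω) (fun _ _ => rfl) (fun _ _ => rfl)
      (fun _ _ => rfl) (fun _ _ => rfl) (fun _ _ => rfl) (fun _ _ => rfl) hua (fun _ _ => rfl),
    info2_congr (ω := setAdv t ω u) (ω' := ω) (fun _ _ => rfl) (fun _ _ => rfl)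
      (fun _ _ => rfl) (fun _ _ => rfl) (fun _ _ => rfl) (fun _ _ => rfl) hua (fun _ _ => rfl),
    info1p_congr (ω := setAdv t ω u) (ω' := ω) (fun _ _ => rfl) (fun _ _ => rfl)
      (fun _ _ => rfl) (fun _ _ => rfl) (fun _ _ => rfl) (fun _ _ => rfl) hua (fun _ _ => rfl),
    info2p_congr (ω := setAdv t ω u) (ω' := ω) (fun _ _ => rfl) (fun _ _ => rfl)
      (fun _ _ => rfl) (fun _ _ => rfl) (fun _ _ => rfl) (fun _ _ => rfl) hua (fun _ _ => rfl)]
  rfl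

lemma teamComP_setAdv {t : ℕ} (ht : t < M.T) (ω : Traj M) (u : M.Ua) :
    teamComP t (setAdv t ω u) = teamComP t ω :=
  teamComP_congr (fun _ _ => rfl) (fun _ _ => rfl) (fun _ _ => rfl)
    (fun _ _ => rfl) (fun _ hs => UAv_setAdv_of_ne (hs.trans ht) ht hs.ne ω u) (fun _ _ => rfl)

lemma stageCost_setAdv (t : ℕ) (ω : Traj M) (u : M.Ua) :
    stageCost t (setAdv t ω u) =
      M.cost t (X0v ω t) (X1v ω t, X2v ω t) (U1v ω t, U2v ω t) u +
      (if (M1v ω t || M2v ω t) then M.commCost (X0v ω t) (X1v ω t, X2v ω t)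
        else 0) := by
  unfold stageCost
  rw [UAv_setAdv]
  rfl

/-- The cost of stage `t` averaged over the adversary's action, with `X⁰_t` and `M_t` read off
`ι = Iᵃ_{t⁺}`. -/
noncomputable def advAvgCost (γ : AdvStrategy M (HistC M)) (t : ℕ) (ι : HistC M)
    (a1 : M.X1) (a2 : M.X2) (b1 : M.U1) (b2 : M.U2) : ℝ :=
  ∑ u : M.Ua, γ.ga t ι u *
    (M.cost t (ι.1.getD t (Classical.arbitrary M.X0)) (a1, a2) (b1, b2) u +
      (if ((ι.2.1.getD t (false, false)).1 || (ι.2.1.getD t (false, false)).2)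
        then M.commCost (ι.1.getD t (Classical.arbitrary M.X0)) (a1, a2) else 0))

lemma teamComP_getD_X0v (t : ℕ) (ω : Traj M) :
    (teamComP t ω).1.getD t (Classical.arbitrary M.X0) = X0v ω t :=
  pre_getD_of_lt (by omega) _ _

lemma teamComP_getD_Mv (t : ℕ) (ω : Traj M) :
    (teamComP t ω).2.1.getD t (false, false) = Mv ω t :=
  pre_getD_of_lt (by omega) _ _

lemma advAvgCost_teamComP (γ : AdvStrategy M (HistC M)) (t : ℕ) (ω : Traj M) :
    advAvgCost γ t (teamComP t ω) (X1v ω t) (X2v ω t) (U1v ω t) (U2v ω t) =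
      ∑ u : M.Ua, γ.ga t (teamComP t ω) u *
        (M.cost t (X0v ω t) (X1v ω t, X2v ω t) (U1v ω t, U2v ω t) u +
          (if (M1v ω t || M2v ω t) then
            M.commCost (X0v ω t) (X1v ω t, X2v ω t) else 0)) := by
  unfold advAvgCost
  apply Finset.sum_congr rfl
  intro u _
  rw [teamComP_getD_X0v, teamComP_getD_Mv]
  rfl

lemma sum_prefixProb_mul_stageCost (σ : TeamStrategy M) (γ : AdvStrategy M (HistC M)) {t : ℕ}
    (ht : t < M.T) :
    ∑ ω : Traj M, prefixProb σ γ M.T ω * stageCost t ω =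
      tailNorm M (t+1) * (transNorm M t * ((Fintype.card M.Ua : ℝ)⁻¹ *
        ∑ ω : Traj M, prefixProb σ γ t ω * teamKernel σ t ω *
          advAvgCost γ t (teamComP t ω) (X1v ω t) (X2v ω t) (U1v ω t) (U2v ω t))) := by
  have hP := adapted_prefixProb σ γ t
  rw [sum_prefixProb_mul_of_adapted σ γ ht (adapted_stageCost t)]
  congr 1
  have hsplit : ∀ ω, prefixProb σ γ (t+1) ω * stageCost t ω =
      prefixProb σ γ t ω * teamKernel σ t ω *
        (γ.ga t (teamComP t ω) (UAv ω t) * stageCost t ω) * transFactor t ω := fun ω => by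
    rw [prefixProb_succ, stageFactor, stageKernel]
    ring
  simp only [hsplit]
  rw [sum_mul_transFactor _ fun ht1 ω b => by
      simp only [hP.setState_succ_eq ht1, teamKernel_setState σ ht1, teamComP_setState ht1,
        UAv_setState, stageCost_setState ht1]]
  congr 1
  rw [(advLens t).sum_eq_inv_card_mul_sum_sum_set]
  dsimp only [advLens]
  simp only [hP.setAdv_eq ht, teamKernel_setAdv σ ht, teamComP_setAdv ht, UAv_setAdv,
    stageCost_setAdv, ← Finset.mul_sum, advAvgCost_teamComP]

lemma sum_prefixProb_mul_teamKernel_mul_lumped (σ : TeamStrategy M)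
    (γ : AdvStrategy M (HistC M)) {t : ℕ} (ht : t < M.T)
    (Φ : HistC M → M.X1 → M.X2 → M.U1 → M.U2 → ℝ) :
    ∑ ω : Traj M, prefixProb (lumped σ) γ t ω * teamKernel (lumped σ) t ω *
        Φ (teamComP t ω) (X1v ω t) (X2v ω t) (U1v ω t) (U2v ω t) =
      ∑ ω : Traj M, prefixProb σ γ t ω * teamKernel σ t ω *
        Φ (teamComP t ω) (X1v ω t) (X2v ω t) (U1v ω t) (U2v ω t) := by
  simp only [sum_prefixProb_mul_teamKernel_mul, reachAct1_lumped σ ht, reachAct2_lumped σ ht]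

lemma J_lumped (σ : TeamStrategy M) (γ : AdvStrategy M (HistC M)) :
    J (lumped σ) γ teamComP = J σ γ teamComP := by
  simp only [J_eq_sum_prefixProb_mul_stageCost]
  refine Finset.sum_congr rfl fun t ht => ?_
  have ht : t < M.T := Finset.mem_range.mp ht
  rw [sum_prefixProb_mul_stageCost _ γ ht, sum_prefixProb_mul_stageCost _ γ ht,
    sum_prefixProb_mul_teamKernel_mul_lumped σ γ ht]

/-- Claim 1 of the appendix: in the maximal-information structure
(`Iᵃ_t = I¹_t ∩ I²_t = C^team_t`, `Iᵃ_{t⁺} = C^team_{t⁺}`), for any team strategy `(f,g)`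
there exists a team strategy `(f̄,ḡ)` in which `f̄ⁱ_t` depends only on `(Xⁱ_t, Iᵃ_t)` and
`ḡⁱ_t` depends only on `(Xⁱ_t, Iᵃ_{t⁺})`, and which yields the same expected cost against
*every* adversary strategy. -/
theorem claim1 (M : Model) (σ : TeamStrategy M) :
    ∃ σb : TeamStrategy M,
      (∀ t, t < M.T → ∀ ω ω' : Traj M, X1v ω t = X1v ω' t →
        teamCom t ω = teamCom t ω' → σb.f1 t (info1 t ω) = σb.f1 t (info1 t ω')) ∧
      (∀ t, t < M.T → ∀ ω ω' : Traj M, X2v ω t = X2v ω' t →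
        teamCom t ω = teamCom t ω' → σb.f2 t (info2 t ω) = σb.f2 t (info2 t ω')) ∧
      (∀ t, t < M.T → ∀ ω ω' : Traj M, X1v ω t = X1v ω' t →
        teamComP t ω = teamComP t ω' → σb.g1 t (info1p t ω) = σb.g1 t (info1p t ω')) ∧
      (∀ t, t < M.T → ∀ ω ω' : Traj M, X2v ω t = X2v ω' t →
        teamComP t ω = teamComP t ω' → σb.g2 t (info2p t ω) = σb.g2 t (info2p t ω')) ∧
      (∀ γ : AdvStrategy M (HistC M), J σb γ teamComP = J σ γ teamComP) := by
  refine ⟨lumped σ, ?_, ?_, ?_, ?_, J_lumped σ⟩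
  · intro t _ ω ω' hx hc
    funext m
    rw [lumped_f1_info1, lumped_f1_info1, hx, hc]
  · intro t _ ω ω' hx hc
    funext m
    rw [lumped_f2_info2, lumped_f2_info2, hx, hc]
  · intro t _ ω ω' hx hc
    funext b
    rw [lumped_g1_info1p, lumped_g1_info1p, hx, hc]
  · intro t _ ω ω' hx hc
    funext b
    rw [lumped_g2_info2p, lumped_g2_info2p, hx, hc]

end TA
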